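/- arXiv:2402.11437 — 3 statements merged into one kernel-verified Lean document; each statement's English description precedes it below -/
import Mathlib

section
/- A connected component C of the subgraph of essential and viable edges of the assignment game is a fundamental component (i.e., admits more than one core imputation restricted to C) if and only if all its vertices are essential. -/
open scoped Classical

/-- `M` is a matching in the bipartite graph with edge set `E`. -/
def IsMatching {U V : Type*} (E M : Finset (U × V)) : Prop :=
  M ⊆ E ∧ (∀ e ∈ M, ∀ e' ∈ M, e.1 = e'.1 → e = e') ∧
    (∀ e ∈ M, ∀ e' ∈ M, e.2 = e'.2 → e = e')

/-- Total weight of a set of edges. -/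
def matchWeight {U V : Type*} (w : U × V → ℚ) (M : Finset (U × V)) : ℚ :=
  ∑ e ∈ M, w e

/-- Maximum weight of a matching in `(E, w)`. -/
noncomputable def maxWeight {U V : Type*} [DecidableEq U] [DecidableEq V]
    (E : Finset (U × V)) (w : U × V → ℚ) : ℚ :=
  ((E.powerset).filter (fun M => IsMatching E M)).sup'
    ⟨∅, by simp [IsMatching]⟩ (matchWeight w)

/-- `M` is a maximum weight matching. -/
def IsMaxMatching {U V : Type*} [DecidableEq U] [DecidableEq V]
    (E : Finset (U × V)) (w : U × V → ℚ) (M : Finset (U × V)) : Prop :=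
  IsMatching E M ∧ matchWeight w M = maxWeight E w

/-- Core imputations of the assignment game (Shapley–Shubik characterization
as optimal dual solutions). -/
def InCore {U V : Type*} [Fintype U] [Fintype V] [DecidableEq U] [DecidableEq V]
    (E : Finset (U × V)) (w : U × V → ℚ) (u : U → ℚ) (v : V → ℚ) : Prop :=
  (∀ i, 0 ≤ u i) ∧ (∀ j, 0 ≤ v j) ∧ (∀ e ∈ E, w e ≤ u e.1 + v e.2) ∧
    (∑ i, u i) + (∑ j, v j) = maxWeight E w

/-- A vertex (from either side) is matched in `M`. -/
def MatchedIn {U V : Type*} (M : Finset (U × V)) : U ⊕ V → Prop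
  | Sum.inl i => ∃ j, (i, j) ∈ M
  | Sum.inr j => ∃ i, (i, j) ∈ M

/-- A vertex is essential if it is matched in every maximum weight matching. -/
def EssentialVertex {U V : Type*} [DecidableEq U] [DecidableEq V]
    (E : Finset (U × V)) (w : U × V → ℚ) (q : U ⊕ V) : Prop :=
  ∀ M, IsMaxMatching E w M → MatchedIn M q

/-- An edge is viable if it is in some but not every maximum weight matching. -/
def ViableEdge {U V : Type*} [DecidableEq U] [DecidableEq V]
    (E : Finset (U × V)) (w : U × V → ℚ) (e : U × V) : Prop :=
  (∃ M, IsMaxMatching E w M ∧ e ∈ M) ∧ (∃ M, IsMaxMatching E w M ∧ e ∉ M)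

/-- A vertex is viable if it is matched in some but not every maximum weight
matching. -/
def ViableVertex {U V : Type*} [DecidableEq U] [DecidableEq V]
    (E : Finset (U × V)) (w : U × V → ℚ) (q : U ⊕ V) : Prop :=
  (∃ M, IsMaxMatching E w M ∧ MatchedIn M q) ∧
    (∃ M, IsMaxMatching E w M ∧ ¬ MatchedIn M q)

/-- Adjacency via essential-or-viable edges (the edges tight in every core
imputation, i.e. those belonging to some maximum weight matching). -/
def TightAdj {U V : Type*} [DecidableEq U] [DecidableEq V]
    (E : Finset (U × V)) (w : U × V → ℚ) (q q' : U ⊕ V) : Prop :=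
  ∃ e ∈ E, (∃ M, IsMaxMatching E w M ∧ e ∈ M) ∧
    ((q = Sum.inl e.1 ∧ q' = Sum.inr e.2) ∨ (q = Sum.inr e.2 ∧ q' = Sum.inl e.1))

/-- Adjacency via viable edges. -/
def ViableAdj {U V : Type*} [DecidableEq U] [DecidableEq V]
    (E : Finset (U × V)) (w : U × V → ℚ) (q q' : U ⊕ V) : Prop :=
  ∃ e ∈ E, ViableEdge E w e ∧
    ((q = Sum.inl e.1 ∧ q' = Sum.inr e.2) ∨ (q = Sum.inr e.2 ∧ q' = Sum.inl e.1))

set_option linter.unusedSectionVars false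

section Basic
variable {U V : Type*} [DecidableEq U] [DecidableEq V]

lemma isMatching_mem_filter {E M : Finset (U × V)} :
    M ∈ (E.powerset).filter (fun M => IsMatching E M) ↔ IsMatching E M := by
  simp only [Finset.mem_filter, Finset.mem_powerset, and_iff_right_iff_imp]
  exact fun h => h.1

lemma matchWeight_le_maxWeight {E M : Finset (U × V)} {w : U × V → ℚ}
    (h : IsMatching E M) : matchWeight w M ≤ maxWeight E w :=
  Finset.le_sup' _ (isMatching_mem_filter.2 h)

lemma exists_isMaxMatching (E : Finset (U × V)) (w : U × V → ℚ) :
    ∃ M, IsMaxMatching E w M := by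
  obtain ⟨M, hM, hval⟩ := Finset.exists_mem_eq_sup'
    (⟨∅, by simp [IsMatching]⟩ : ((E.powerset).filter (fun M => IsMatching E M)).Nonempty)
    (matchWeight w)
  exact ⟨M, isMatching_mem_filter.1 hM, hval.symm⟩

lemma maxWeight_le {E : Finset (U × V)} {w : U × V → ℚ} {c : ℚ}
    (h : ∀ M, IsMatching E M → matchWeight w M ≤ c) : maxWeight E w ≤ c := by
  apply Finset.sup'_le
  intro M hM
  exact h M (isMatching_mem_filter.1 hM)

lemma matching_subset {E M : Finset (U × V)} (h : IsMatching E M) : M ⊆ E := h.1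

lemma matching_fst_injOn {E M : Finset (U × V)} (h : IsMatching E M) :
    Set.InjOn Prod.fst (M : Set (U × V)) := fun e he e' he' hee' => h.2.1 e he e' he' hee'

lemma matching_snd_injOn {E M : Finset (U × V)} (h : IsMatching E M) :
    Set.InjOn Prod.snd (M : Set (U × V)) := fun e he e' he' hee' => h.2.2 e he e' he' hee'

/-- weight of a matching written by coverage sums of any (u,v) tight on its edges -/
lemma matchWeight_eq_cov {E M : Finset (U × V)} {w : U × V → ℚ}
    (h : IsMatching E M) (u : U → ℚ) (v : V → ℚ)
    (ht : ∀ e ∈ M, w e = u e.1 + v e.2) :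
    matchWeight w M = ∑ i ∈ M.image Prod.fst, u i + ∑ j ∈ M.image Prod.snd, v j := by
  rw [Finset.sum_image (fun e he e' he' => h.2.1 e he e' he'),
    Finset.sum_image (fun e he e' he' => h.2.2 e he e' he')]
  rw [matchWeight, ← Finset.sum_add_distrib]
  exact Finset.sum_congr rfl ht

end Basic

section CS
variable {U V : Type*} [Fintype U] [Fintype V] [DecidableEq U] [DecidableEq V]
variable {E : Finset (U × V)} {w : U × V → ℚ}

lemma weak_duality {M : Finset (U × V)} (hM : IsMatching E M)
    {u : U → ℚ} {v : V → ℚ} (hu : ∀ i, 0 ≤ u i) (hv : ∀ j, 0 ≤ v j)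
    (hfeas : ∀ e ∈ E, w e ≤ u e.1 + v e.2) :
    matchWeight w M ≤ (∑ i, u i) + (∑ j, v j) := by
  have h1 : matchWeight w M ≤ ∑ e ∈ M, (u e.1 + v e.2) :=
    Finset.sum_le_sum (fun e he => hfeas e (hM.1 he))
  have h2 : ∑ e ∈ M, (u e.1 + v e.2)
      = ∑ i ∈ M.image Prod.fst, u i + ∑ j ∈ M.image Prod.snd, v j := by
    rw [Finset.sum_image (fun e he e' he' => hM.2.1 e he e' he'),
      Finset.sum_image (fun e he e' he' => hM.2.2 e he e' he'), Finset.sum_add_distrib]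
  have h3 : ∑ i ∈ M.image Prod.fst, u i ≤ ∑ i, u i :=
    Finset.sum_le_sum_of_subset_of_nonneg (Finset.subset_univ _) (fun i _ _ => hu i)
  have h4 : ∑ j ∈ M.image Prod.snd, v j ≤ ∑ j, v j :=
    Finset.sum_le_sum_of_subset_of_nonneg (Finset.subset_univ _) (fun j _ _ => hv j)
  linarith

lemma comp_slack {u : U → ℚ} {v : V → ℚ} (hc : InCore E w u v)
    {M : Finset (U × V)} (hM : IsMaxMatching E w M) :
    (∀ e ∈ M, w e = u e.1 + v e.2) ∧
      (∀ i, i ∉ M.image Prod.fst → u i = 0) ∧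
      (∀ j, j ∉ M.image Prod.snd → v j = 0) := by
  obtain ⟨hu, hv, hfeas, htot⟩ := hc
  have h2 : ∑ e ∈ M, (u e.1 + v e.2)
      = ∑ i ∈ M.image Prod.fst, u i + ∑ j ∈ M.image Prod.snd, v j := by
    rw [Finset.sum_image (fun e he e' he' => hM.1.2.1 e he e' he'),
      Finset.sum_image (fun e he e' he' => hM.1.2.2 e he e' he'), Finset.sum_add_distrib]
  have hBsum : ∑ i ∈ Finset.univ \ M.image Prod.fst, u i + ∑ i ∈ M.image Prod.fst, u i
      = ∑ i, u i := Finset.sum_sdiff (Finset.subset_univ _)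
  have hCsum : ∑ j ∈ Finset.univ \ M.image Prod.snd, v j + ∑ j ∈ M.image Prod.snd, v j
      = ∑ j, v j := Finset.sum_sdiff (Finset.subset_univ _)
  have hA0 : (0:ℚ) ≤ ∑ e ∈ M, (u e.1 + v e.2 - w e) :=
    Finset.sum_nonneg (fun e he => by have := hfeas e (hM.1.1 he); linarith)
  have hB0 : (0:ℚ) ≤ ∑ i ∈ Finset.univ \ M.image Prod.fst, u i :=
    Finset.sum_nonneg (fun i _ => hu i)
  have hC0 : (0:ℚ) ≤ ∑ j ∈ Finset.univ \ M.image Prod.snd, v j :=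
    Finset.sum_nonneg (fun j _ => hv j)
  have hAeq : ∑ e ∈ M, (u e.1 + v e.2 - w e)
      = ∑ e ∈ M, (u e.1 + v e.2) - matchWeight w M := by
    rw [Finset.sum_sub_distrib]; rfl
  have key : ∑ e ∈ M, (u e.1 + v e.2 - w e)
      + ∑ i ∈ Finset.univ \ M.image Prod.fst, u i
      + ∑ j ∈ Finset.univ \ M.image Prod.snd, v j = 0 := by
    have := hM.2
    rw [hAeq, h2]
    linarith
  have hA : ∑ e ∈ M, (u e.1 + v e.2 - w e) = 0 := by linarith
  have hB : ∑ i ∈ Finset.univ \ M.image Prod.fst, u i = 0 := by linarith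
  have hC : ∑ j ∈ Finset.univ \ M.image Prod.snd, v j = 0 := by linarith
  refine ⟨fun e he => ?_, fun i hi => ?_, fun j hj => ?_⟩
  · have := (Finset.sum_eq_zero_iff_of_nonneg
      (fun e he => by have := hfeas e (hM.1.1 he); linarith)).1 hA e he
    linarith
  · exact (Finset.sum_eq_zero_iff_of_nonneg (fun i _ => hu i)).1 hB i
      (Finset.mem_sdiff.2 ⟨Finset.mem_univ _, hi⟩)
  · exact (Finset.sum_eq_zero_iff_of_nonneg (fun j _ => hv j)).1 hC j
      (Finset.mem_sdiff.2 ⟨Finset.mem_univ _, hj⟩)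

/-- an inessential vertex gets 0 in every core imputation -/
lemma inessential_zero {u : U → ℚ} {v : V → ℚ} (hc : InCore E w u v)
    {q : U ⊕ V} (hq : ¬ EssentialVertex E w q) : Sum.elim u v q = 0 := by
  rw [EssentialVertex, not_forall] at hq
  obtain ⟨M, hM⟩ := hq
  rw [Classical.not_imp] at hM
  obtain ⟨hMmax, hunm⟩ := hM
  obtain ⟨hT, hU, hV⟩ := comp_slack hc hMmax
  cases q with
  | inl i =>
    refine hU i (fun hmem => hunm ?_)
    obtain ⟨e, he, hei⟩ := Finset.mem_image.1 hmem
    exact ⟨e.2, by rw [← hei]; exact he⟩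
  | inr j =>
    refine hV j (fun hmem => hunm ?_)
    obtain ⟨e, he, hej⟩ := Finset.mem_image.1 hmem
    exact ⟨e.1, by rw [← hej]; exact he⟩

end CS

section Reach
variable {U V : Type*} [DecidableEq U] [DecidableEq V]

lemma mem_image_fst {M : Finset (U × V)} {i : U} :
    i ∈ M.image Prod.fst ↔ ∃ j, (i, j) ∈ M := by
  constructor
  · intro h
    obtain ⟨e, he, hei⟩ := Finset.mem_image.1 h
    exact ⟨e.2, by rw [← hei]; exact he⟩
  · rintro ⟨j, hj⟩
    exact Finset.mem_image.2 ⟨(i, j), hj, rfl⟩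

lemma mem_image_snd {M : Finset (U × V)} {j : V} :
    j ∈ M.image Prod.snd ↔ ∃ i, (i, j) ∈ M := by
  constructor
  · intro h
    obtain ⟨e, he, hej⟩ := Finset.mem_image.1 h
    exact ⟨e.1, by rw [← hej]; exact he⟩
  · rintro ⟨i, hi⟩
    exact Finset.mem_image.2 ⟨(i, j), hi, rfl⟩

/-- `n`-step alternating reachability from an exposed vertex `a`,
using `H`-edges forward and `M`-edges backward, avoiding `V`-vertices in `S`. -/
def ReachN (H M : Finset (U × V)) (S : Finset V) : ℕ → U → U → Prop
  | 0 => fun a i => i = a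
  | n+1 => fun a i => ∃ j, j ∉ S ∧ (a, j) ∈ H ∧ ∃ i1, (i1, j) ∈ M ∧ ReachN H M S n i1 i

lemma reachN_mono {H M : Finset (U × V)} {S S' : Finset V} (hS : S' ⊆ S) :
    ∀ n a i, ReachN H M S n a i → ReachN H M S' n a i := by
  intro n
  induction n with
  | zero => exact fun a i h => h
  | succ n ih =>
    rintro a i ⟨j, hjS, haj, i1, hi1, tail⟩
    exact ⟨j, fun hc => hjS (hS hc), haj, i1, hi1, ih i1 i tail⟩

lemma reachN_congr {H M M' : Finset (U × V)} {S : Finset V}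
    (hagree : ∀ x j, j ∉ S → ((x, j) ∈ M ↔ (x, j) ∈ M')) :
    ∀ n a i, ReachN H M S n a i → ReachN H M' S n a i := by
  intro n
  induction n with
  | zero => exact fun a i h => h
  | succ n ih =>
    rintro a i ⟨j, hjS, haj, i1, hi1, tail⟩
    exact ⟨j, hjS, haj, i1, (hagree i1 j hjS).1 hi1, ih i1 i tail⟩

lemma reachN_cut {H M : Finset (U × V)} {E0 : Finset (U × V)} (hM : IsMatching E0 M)
    {S : Finset V} {i1 : U} {j1 : V} (hij : (i1, j1) ∈ M) :
    ∀ n x y, ReachN H M S n x y →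
      ReachN H M (insert j1 S) n x y ∨ ∃ m, m < n ∧ ReachN H M S m i1 y := by
  intro n
  induction n with
  | zero => exact fun x y h => Or.inl h
  | succ n ih =>
    rintro x y ⟨j, hjS, hxj, i2, hi2, tail⟩
    by_cases hj : j = j1
    · subst hj
      have : (i2, j) = (i1, j) := hM.2.2 _ hi2 _ hij rfl
      have hi21 : i2 = i1 := congrArg Prod.fst this
      subst hi21
      exact Or.inr ⟨n, Nat.lt_succ_self n, tail⟩
    · rcases ih i2 y tail with h | ⟨m, hm, p⟩
      · exact Or.inl ⟨j, by simp [hj, hjS], hxj, i2, hi2, h⟩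
      · exact Or.inr ⟨m, Nat.lt_succ_of_lt hm, p⟩

lemma reachN_snoc {H M : Finset (U × V)} {j : V} {x : U} :
    ∀ n a i, ReachN H M ∅ n a i → (i, j) ∈ H → (x, j) ∈ M →
      ReachN H M ∅ (n+1) a x := by
  intro n
  induction n with
  | zero =>
    intro a i h hij hxj
    subst h
    exact ⟨j, Finset.notMem_empty j, hij, x, hxj, rfl⟩
  | succ n ih =>
    rintro a i ⟨j', hj'S, haj', i1, hi1, tail⟩ hij hxj
    exact ⟨j', hj'S, haj', i1, hi1, ih i1 i tail hij hxj⟩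

lemma reachN_matched {H M : Finset (U × V)} {S : Finset V} :
    ∀ n a i, ReachN H M S n a i → i = a ∨ ∃ j, (i, j) ∈ M := by
  intro n
  induction n with
  | zero => exact fun a i h => Or.inl h
  | succ n ih =>
    rintro a i ⟨j, _, _, i1, hi1, tail⟩
    rcases ih i1 i tail with h | h
    · exact Or.inr ⟨j, h ▸ hi1⟩
    · exact Or.inr h

lemma flipPath {H : Finset (U × V)} :
    ∀ n (M : Finset (U × V)), IsMatching H M → ∀ a : U, ¬ MatchedIn M (Sum.inl a) →
      ∀ i, ReachN H M ∅ n a i →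
      ∃ M', IsMatching H M' ∧ M'.image Prod.snd = M.image Prod.snd ∧
        M'.image Prod.fst = (insert a (M.image Prod.fst)).erase i := by
  intro n
  induction n using Nat.strong_induction_on with
  | _ n IH =>
    match n with
    | 0 =>
      intro M hM a ha i hre
      have hia : i = a := hre
      subst hia
      refine ⟨M, hM, rfl, ?_⟩
      rw [Finset.erase_insert (fun hc => ha (mem_image_fst.1 hc))]
    | Nat.succ n =>
      rintro M hM a ha i ⟨j1, -, haj1, i1, hi1j1, tail⟩
      have hi1a : i1 ≠ a := fun hc => ha ⟨j1, hc ▸ hi1j1⟩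
      rcases reachN_cut hM hi1j1 n i1 i tail with hpath | ⟨m, hm, p⟩
      · -- flip the first edge
        set M1 : Finset (U × V) := insert (a, j1) (M.erase (i1, j1)) with hM1def
        have hmemM1 : ∀ e : U × V, e ∈ M1 ↔ e = (a, j1) ∨ (e ∈ M ∧ e ≠ (i1, j1)) := by
          intro e
          simp [hM1def, Finset.mem_insert, Finset.mem_erase, and_comm]
        have hM1 : IsMatching H M1 := by
          refine ⟨?_, ?_, ?_⟩
          · intro e he
            rcases (hmemM1 e).1 he with h | ⟨h, -⟩
            · rwa [h]
            · exact hM.1 h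
          · intro e he e' he' hfst
            rcases (hmemM1 e).1 he with h | ⟨h, hne⟩ <;>
              rcases (hmemM1 e').1 he' with h' | ⟨h', hne'⟩
            · rw [h, h']
            · refine absurd ⟨e'.2, ?_⟩ ha
              have hea : e'.1 = a := by rw [← hfst, h]
              rw [← hea]; exact h'
            · refine absurd ⟨e.2, ?_⟩ ha
              have hea : e.1 = a := by rw [hfst, h']
              rw [← hea]; exact h
            · exact hM.2.1 e h e' h' hfst
          · intro e he e' he' hsnd
            rcases (hmemM1 e).1 he with h | ⟨h, hne⟩ <;>
              rcases (hmemM1 e').1 he' with h' | ⟨h', hne'⟩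
            · rw [h, h']
            · exact absurd (hM.2.2 e' h' _ hi1j1 (by rw [← hsnd, h])) hne'
            · exact absurd (hM.2.2 e h _ hi1j1 (by rw [hsnd, h'])) hne
            · exact hM.2.2 e h e' h' hsnd
        have hi1exp : ¬ MatchedIn M1 (Sum.inl i1) := by
          rintro ⟨j, hj⟩
          rcases (hmemM1 (i1, j)).1 hj with h | ⟨h, hne⟩
          · exact hi1a (congrArg Prod.fst h)
          · exact hne (hM.2.1 _ h _ hi1j1 rfl)
        have hagree : ∀ x j, j ∉ ({j1} : Finset V) → ((x, j) ∈ M ↔ (x, j) ∈ M1) := by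
          intro x j hj
          rw [Finset.mem_singleton] at hj
          rw [hmemM1]
          constructor
          · intro h
            exact Or.inr ⟨h, fun hc => hj (congrArg Prod.snd hc)⟩
          · rintro (h | ⟨h, -⟩)
            · exact absurd (congrArg Prod.snd h) hj
            · exact h
        have hpath1 : ReachN H M1 ∅ n i1 i := by
          have h1 : ReachN H M ({j1} : Finset V) n i1 i := by
            simpa using hpath
          exact reachN_mono (Finset.empty_subset _) n i1 i
            (reachN_congr hagree n i1 i h1)
        obtain ⟨M', hM', hsnd', hfst'⟩ := IH n (Nat.lt_succ_self n) M1 hM1 i1 hi1exp i hpath1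
        have hsndM1 : M1.image Prod.snd = M.image Prod.snd := by
          ext j
          rw [mem_image_snd, mem_image_snd]
          constructor
          · rintro ⟨x, hx⟩
            rcases (hmemM1 (x, j)).1 hx with h | ⟨h, -⟩
            · exact ⟨i1, by rw [show j = j1 from congrArg Prod.snd h]; exact hi1j1⟩
            · exact ⟨x, h⟩
          · rintro ⟨x, hx⟩
            by_cases hc : (x, j) = (i1, j1)
            · exact ⟨a, (hmemM1 (a, j)).2 (Or.inl (by rw [show j = j1 from congrArg Prod.snd hc]))⟩
            · exact ⟨x, (hmemM1 (x, j)).2 (Or.inr ⟨hx, hc⟩)⟩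
        have hfstM1 : M1.image Prod.fst = (insert a (M.image Prod.fst)).erase i1 := by
          ext x
          rw [mem_image_fst, Finset.mem_erase, Finset.mem_insert, mem_image_fst]
          constructor
          · rintro ⟨j, hj⟩
            rcases (hmemM1 (x, j)).1 hj with h | ⟨h, hne⟩
            · have : x = a := congrArg Prod.fst h
              exact ⟨this ▸ hi1a.symm, Or.inl this⟩
            · refine ⟨?_, Or.inr ⟨j, h⟩⟩
              intro hc
              subst hc
              exact hne (hM.2.1 _ h _ hi1j1 rfl)
          · rintro ⟨hxi1, h | ⟨j, hj⟩⟩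
            · exact ⟨j1, (hmemM1 (x, j1)).2 (Or.inl (by rw [h]))⟩
            · exact ⟨j, (hmemM1 (x, j)).2 (Or.inr ⟨hj, fun hc => hxi1 (congrArg Prod.fst hc)⟩)⟩
        refine ⟨M', hM', by rw [hsnd', hsndM1], ?_⟩
        rw [hfst', hfstM1]
        have h1 : insert i1 ((insert a (M.image Prod.fst)).erase i1)
            = insert a (M.image Prod.fst) := by
          apply Finset.insert_erase
          exact Finset.mem_insert_of_mem (mem_image_fst.2 ⟨j1, hi1j1⟩)
        rw [h1]
      · exact IH (m+1) (by omega) M hM a ha i ⟨j1, Finset.notMem_empty j1, haj1, i1, hi1j1, p⟩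

end Reach

section Improve
variable {U V : Type*} [Fintype U] [Fintype V] [DecidableEq U] [DecidableEq V]

lemma improve (E : Finset (U × V)) (w : U × V → ℚ) (u : U → ℕ) (v : V → ℕ)
    (hfeas : ∀ e ∈ E, w e ≤ (u e.1 : ℚ) + (v e.2 : ℚ))
    (hwnat : ∀ e ∈ E, ∃ n : ℕ, w e = (n : ℚ))
    (H : Finset (U × V)) (hH : H = E.filter (fun e => w e = (u e.1 : ℚ) + (v e.2 : ℚ)))
    (M : Finset (U × V)) (hM : IsMatching H M)
    (hMmax : ∀ N, IsMatching H N → matchWeight w N ≤ matchWeight w M)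
    (a : U) (ha : ¬ MatchedIn M (Sum.inl a)) (hua : 1 ≤ u a) :
    ∃ (u' : U → ℕ) (v' : V → ℕ), (∀ e ∈ E, w e ≤ (u' e.1 : ℚ) + (v' e.2 : ℚ)) ∧
      (∑ i, u' i) + (∑ j, v' j) < (∑ i, u i) + (∑ j, v j) := by
  have htight : ∀ e ∈ H, w e = (u e.1 : ℚ) + (v e.2 : ℚ) := by
    intro e he
    rw [hH] at he
    exact (Finset.mem_filter.1 he).2
  have tightval : ∀ N, IsMatching H N → matchWeight w N =
      ∑ i ∈ N.image Prod.fst, (u i : ℚ) + ∑ j ∈ N.image Prod.snd, (v j : ℚ) :=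
    fun N hN => matchWeight_eq_cov hN _ _ (fun e he => htight e (hN.1 he))
  set ZU : Finset U := Finset.univ.filter (fun i => ∃ n, ReachN H M ∅ n a i) with hZU
  set ZV : Finset V := Finset.univ.filter (fun j => ∃ i ∈ ZU, (i, j) ∈ H) with hZV
  have haZU : a ∈ ZU := Finset.mem_filter.2 ⟨Finset.mem_univ _, 0, rfl⟩
  have hanm : a ∉ M.image Prod.fst := fun hc => ha (mem_image_fst.1 hc)
  -- P1 : every vertex of ZV is matched by M
  have P1 : ∀ j ∈ ZV, ∃ x, (x, j) ∈ M := by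
    intro j hj
    by_contra hnone
    push_neg at hnone
    obtain ⟨-, i, hiZU, hij⟩ := Finset.mem_filter.1 hj
    obtain ⟨-, n, hre⟩ := Finset.mem_filter.1 hiZU
    obtain ⟨M', hM', hsnd', hfst'⟩ := flipPath n M hM a ha i hre
    have hjM' : j ∉ M'.image Prod.snd := by
      rw [hsnd']
      intro hc
      obtain ⟨x, hx⟩ := mem_image_snd.1 hc
      exact hnone x hx
    have hiM' : i ∉ M'.image Prod.fst := by
      rw [hfst']
      exact Finset.notMem_erase _ _
    set M'' : Finset (U × V) := insert (i, j) M' with hM''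
    have hijM' : (i, j) ∉ M' := fun hc => hiM' (mem_image_fst.2 ⟨j, hc⟩)
    have hM''m : IsMatching H M'' := by
      refine ⟨?_, ?_, ?_⟩
      · exact Finset.insert_subset hij hM'.1
      · intro e he e' he' hfst
        rcases Finset.mem_insert.1 he with h | h <;> rcases Finset.mem_insert.1 he' with h' | h'
        · rw [h, h']
        · refine absurd (mem_image_fst.2 ⟨e'.2, ?_⟩) hiM'
          have hei : e'.1 = i := by rw [← hfst, h]
          rw [← hei]; exact h'
        · refine absurd (mem_image_fst.2 ⟨e.2, ?_⟩) hiM'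
          have hei : e.1 = i := by rw [hfst, h']
          rw [← hei]; exact h
        · exact hM'.2.1 e h e' h' hfst
      · intro e he e' he' hsnd
        rcases Finset.mem_insert.1 he with h | h <;> rcases Finset.mem_insert.1 he' with h' | h'
        · rw [h, h']
        · refine absurd (mem_image_snd.2 ⟨e'.1, ?_⟩) hjM'
          have hej : e'.2 = j := by rw [← hsnd, h]
          rw [← hej]; exact h'
        · refine absurd (mem_image_snd.2 ⟨e.1, ?_⟩) hjM'
          have hej : e.2 = j := by rw [hsnd, h']
          rw [← hej]; exact h
        · exact hM'.2.2 e h e' h' hsnd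
    have hwM'' := tightval M'' hM''m
    have hwM := tightval M hM
    have hfstM'' : M''.image Prod.fst = insert i (M'.image Prod.fst) := Finset.image_insert _ _ _
    have hsndM'' : M''.image Prod.snd = insert j (M'.image Prod.snd) := Finset.image_insert _ _ _
    have hsum1 : ∑ x ∈ M''.image Prod.fst, (u x : ℚ)
        = (u i : ℚ) + ∑ x ∈ M'.image Prod.fst, (u x : ℚ) := by
      rw [hfstM'', Finset.sum_insert hiM']
    have hsum2 : ∑ y ∈ M''.image Prod.snd, (v y : ℚ)
        = (v j : ℚ) + ∑ y ∈ M'.image Prod.snd, (v y : ℚ) := by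
      rw [hsndM'', Finset.sum_insert hjM']
    have hkey : (u a : ℚ) + ∑ x ∈ M.image Prod.fst, (u x : ℚ)
        ≤ (u i : ℚ) + ∑ x ∈ M'.image Prod.fst, (u x : ℚ) := by
      rw [hfst']
      have h2 : ∑ x ∈ insert a (M.image Prod.fst), (u x : ℚ)
          = (u a : ℚ) + ∑ x ∈ M.image Prod.fst, (u x : ℚ) := Finset.sum_insert hanm
      by_cases hi : i ∈ insert a (M.image Prod.fst)
      · have h1 := Finset.add_sum_erase (insert a (M.image Prod.fst)) (fun x => (u x : ℚ)) hi
        linarith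
      · rw [Finset.erase_eq_of_notMem hi]
        have : (0:ℚ) ≤ (u i : ℚ) := Nat.cast_nonneg _
        linarith
    have hge : matchWeight w M + 1 ≤ matchWeight w M'' := by
      rw [hwM'', hwM, hsum1, hsum2, hsnd']
      have h1 : (1:ℚ) ≤ (u a : ℚ) := by exact_mod_cast hua
      have h2 : (0:ℚ) ≤ (v j : ℚ) := Nat.cast_nonneg _
      linarith
    have := hMmax M'' hM''m
    linarith
  -- P2 : dual values on ZU are positive
  have P2 : ∀ i ∈ ZU, 1 ≤ u i := by
    intro i hi
    by_contra hui
    have hui0 : u i = 0 := by omega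
    have hia : i ≠ a := fun hc => by rw [hc] at hui0; omega
    obtain ⟨-, n, hre⟩ := Finset.mem_filter.1 hi
    obtain ⟨M', hM', hsnd', hfst'⟩ := flipPath n M hM a ha i hre
    have hiM : i ∈ M.image Prod.fst := by
      rcases reachN_matched n a i hre with h | ⟨j, hj⟩
      · exact absurd h hia
      · exact mem_image_fst.2 ⟨j, hj⟩
    have hwM' := tightval M' hM'
    have hwM := tightval M hM
    have hui0' : (u i : ℚ) = 0 := by exact_mod_cast hui0
    have hsum : ∑ x ∈ M'.image Prod.fst, (u x : ℚ)
        = (u a : ℚ) + ∑ x ∈ M.image Prod.fst, (u x : ℚ) := by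
      rw [hfst', Finset.sum_erase (f := fun x => (u x : ℚ)) _ hui0', Finset.sum_insert hanm]
    have hge : matchWeight w M + 1 ≤ matchWeight w M' := by
      rw [hwM', hwM, hsum, hsnd']
      have h1 : (1:ℚ) ≤ (u a : ℚ) := by exact_mod_cast hua
      linarith
    have := hMmax M' hM'
    linarith
  -- |ZV| < |ZU|
  have hcard : ZV.card < ZU.card := by
    set phi : V → U := fun j => if h : ∃ x, (x, j) ∈ M then h.choose else a with hphi
    have hphiM : ∀ j ∈ ZV, (phi j, j) ∈ M := by
      intro j hj
      have h := P1 j hj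
      simp only [hphi, dif_pos h]
      exact h.choose_spec
    have hmaps : ∀ j ∈ ZV, phi j ∈ ZU.erase a := by
      intro j hj
      obtain ⟨-, i, hiZU, hij⟩ := Finset.mem_filter.1 hj
      obtain ⟨-, n, hre⟩ := Finset.mem_filter.1 hiZU
      refine Finset.mem_erase.2 ⟨fun hc => ha ⟨j, hc ▸ hphiM j hj⟩, ?_⟩
      exact Finset.mem_filter.2 ⟨Finset.mem_univ _, n+1,
        reachN_snoc n a i hre hij (hphiM j hj)⟩
    have hinj : Set.InjOn phi (ZV : Set V) := by
      intro j hj j' hj' heq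
      have h1 := hphiM j hj
      have h2 := hphiM j' hj'
      rw [heq] at h1
      exact congrArg Prod.snd (hM.2.1 _ h1 _ h2 rfl)
    have hle : ZV.card ≤ (ZU.erase a).card :=
      Finset.card_le_card_of_injOn phi hmaps hinj
    have := Finset.card_erase_of_mem haZU
    have hpos : 0 < ZU.card := Finset.card_pos.2 ⟨a, haZU⟩
    omega
  -- the improved dual
  refine ⟨fun i => u i - (if i ∈ ZU then 1 else 0),
    fun j => v j + (if j ∈ ZV then 1 else 0), ?_, ?_⟩
  · rintro ⟨i, j⟩ he
    have h1 : w (i, j) ≤ (u i : ℚ) + (v j : ℚ) := hfeas (i, j) he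
    by_cases hiZ : i ∈ ZU
    · have hui := P2 i hiZ
      by_cases hjZ : j ∈ ZV
      · simp only [hiZ, hjZ, if_pos]
        have h2 : ((u i - 1 : ℕ) : ℚ) = (u i : ℚ) - 1 := by
          rw [Nat.cast_sub hui]; norm_num
        rw [h2]
        push_cast
        linarith
      · have hnt : (i, j) ∉ H := by
          intro hc
          exact hjZ (Finset.mem_filter.2 ⟨Finset.mem_univ _, i, hiZ, hc⟩)
        have hne : ¬ (w (i, j) = (u i : ℚ) + (v j : ℚ)) := by
          intro hc
          exact hnt (by rw [hH]; exact Finset.mem_filter.2 ⟨he, hc⟩)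
        obtain ⟨n0, hn0⟩ := hwnat (i, j) he
        have hlt : w (i, j) < (u i : ℚ) + (v j : ℚ) :=
          lt_of_le_of_ne (hfeas (i, j) he) hne
        have hnat : n0 + 1 ≤ u i + v j := by
          have : (n0 : ℚ) < ((u i + v j : ℕ) : ℚ) := by push_cast; rw [← hn0]; exact hlt
          exact_mod_cast this
        simp only [hiZ, hjZ, if_pos, if_neg, not_false_iff]
        rw [hn0, Nat.cast_sub hui]
        push_cast
        have : ((n0 : ℚ)) + 1 ≤ (u i : ℚ) + (v j : ℚ) := by exact_mod_cast hnat
        linarith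
    · by_cases hjZ : j ∈ ZV <;>
        simp only [hiZ, hjZ, if_pos, if_neg, not_false_iff, Nat.sub_zero, Nat.add_zero] <;>
        push_cast <;> linarith
  · beta_reduce
    have hZVcard : ∑ j, (if j ∈ ZV then 1 else 0) = ZV.card := by
      rw [Finset.sum_ite_mem, Finset.univ_inter, Finset.sum_const, smul_eq_mul, mul_one]
    have hZUcard : ∑ i, (if i ∈ ZU then 1 else 0) = ZU.card := by
      rw [Finset.sum_ite_mem, Finset.univ_inter, Finset.sum_const, smul_eq_mul, mul_one]
    have hsubsum : ∑ i, (u i - (if i ∈ ZU then 1 else 0)) + ZU.card = ∑ i, u i := by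
      rw [← hZUcard, ← Finset.sum_add_distrib]
      apply Finset.sum_congr rfl
      intro i _
      by_cases hiZ : i ∈ ZU
      · have := P2 i hiZ
        simp only [hiZ, if_pos]
        omega
      · simp [hiZ]
    have haddsum : ∑ j, (v j + (if j ∈ ZV then 1 else 0)) = ∑ j, v j + ZV.card := by
      rw [Finset.sum_add_distrib, hZVcard]
    omega

end Improve

section Swap
variable {U V : Type*} [DecidableEq U] [DecidableEq V]

lemma mem_image_swap {X : Finset (U × V)} {i : U} {j : V} :
    (j, i) ∈ X.image Prod.swap ↔ (i, j) ∈ X := by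
  constructor
  · intro h
    obtain ⟨e, he, heq⟩ := Finset.mem_image.1 h
    have h1 : e.2 = j := congrArg Prod.fst heq
    have h2 : e.1 = i := congrArg Prod.snd heq
    rw [← h1, ← h2]; exact he
  · intro h
    exact Finset.mem_image.2 ⟨(i, j), h, rfl⟩

lemma image_swap_swap (X : Finset (U × V)) : (X.image Prod.swap).image Prod.swap = X := by
  rw [Finset.image_image]
  have : (Prod.swap ∘ Prod.swap : U × V → U × V) = id := by
    funext e; simp
  rw [this, Finset.image_id]

lemma isMatching_swap {E M : Finset (U × V)} (h : IsMatching E M) :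
    IsMatching (E.image Prod.swap) (M.image Prod.swap) := by
  refine ⟨Finset.image_subset_image h.1, ?_, ?_⟩
  · rintro e he e' he' hfst
    obtain ⟨f, hf, rfl⟩ := Finset.mem_image.1 he
    obtain ⟨f', hf', rfl⟩ := Finset.mem_image.1 he'
    have : f = f' := h.2.2 f hf f' hf' hfst
    rw [this]
  · rintro e he e' he' hsnd
    obtain ⟨f, hf, rfl⟩ := Finset.mem_image.1 he
    obtain ⟨f', hf', rfl⟩ := Finset.mem_image.1 he'
    have : f = f' := h.2.1 f hf f' hf' hsnd
    rw [this]

lemma matchWeight_swap (w : U × V → ℚ) (M : Finset (U × V)) :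
    matchWeight (w ∘ Prod.swap) (M.image Prod.swap) = matchWeight w M := by
  rw [matchWeight, matchWeight, Finset.sum_image]
  · apply Finset.sum_congr rfl
    intro e _
    simp
  · intro e _ e' _ h
    exact Prod.swap_injective h

end Swap

section StrongDuality
variable {U V : Type*} [Fintype U] [Fintype V] [DecidableEq U] [DecidableEq V]

lemma exists_core_nat (E : Finset (U × V)) (w : U × V → ℚ)
    (hwnat : ∀ e ∈ E, ∃ n : ℕ, w e = (n : ℚ)) :
    ∃ (u : U → ℚ) (v : V → ℚ), InCore E w u v := by
  set S : Set ℕ := {s | ∃ (u : U → ℕ) (v : V → ℕ),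
    (∀ e ∈ E, w e ≤ (u e.1 : ℚ) + (v e.2 : ℚ)) ∧ (∑ i, u i) + (∑ j, v j) = s} with hS
  have hSne : S.Nonempty := by
    refine ⟨(∑ i, (fun _ : U => E.sup fun e => ⌈w e⌉₊) i) + (∑ j, (fun _ : V => 0) j),
      (fun _ => E.sup fun e => ⌈w e⌉₊), (fun _ => 0), fun e he => ?_, rfl⟩
    have h1 : w e ≤ (⌈w e⌉₊ : ℚ) := Nat.le_ceil _
    have h2 : (⌈w e⌉₊ : ℚ) ≤ ((E.sup fun e => ⌈w e⌉₊ : ℕ) : ℚ) := by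
      exact_mod_cast Finset.le_sup (f := fun e => ⌈w e⌉₊) he
    push_cast
    linarith
  obtain ⟨u, v, hfeas, hsum⟩ := Nat.sInf_mem hSne
  set H : Finset (U × V) := E.filter (fun e => w e = (u e.1 : ℚ) + (v e.2 : ℚ)) with hH
  obtain ⟨M, hMm, hMval⟩ := exists_isMaxMatching H w
  have hMmax : ∀ N, IsMatching H N → matchWeight w N ≤ matchWeight w M := by
    intro N hN
    rw [hMval]
    exact matchWeight_le_maxWeight hN
  -- all positive U-vertices are covered
  have hcovU : ∀ i, 1 ≤ u i → i ∈ M.image Prod.fst := by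
    intro i hi
    by_contra hno
    have hexp : ¬ MatchedIn M (Sum.inl i) := fun ⟨j, hj⟩ => hno (mem_image_fst.2 ⟨j, hj⟩)
    obtain ⟨u', v', hfeas', hlt⟩ := improve E w u v hfeas hwnat H hH M hMm hMmax i hexp hi
    have : ((∑ i, u' i) + (∑ j, v' j)) ∈ S := ⟨u', v', hfeas', rfl⟩
    have := Nat.sInf_le this
    omega
  -- all positive V-vertices are covered (by symmetry)
  have hcovV : ∀ j, 1 ≤ v j → j ∈ M.image Prod.snd := by
    intro j hj
    by_contra hno
    have hexp : ¬ MatchedIn (M.image Prod.swap) (Sum.inl j) := by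
      rintro ⟨i, hij⟩
      exact hno (mem_image_snd.2 ⟨i, mem_image_swap.1 hij⟩)
    have hfeas2 : ∀ e ∈ E.image Prod.swap,
        (w ∘ Prod.swap) e ≤ (v e.1 : ℚ) + (u e.2 : ℚ) := by
      rintro ⟨y, x⟩ he
      have := hfeas (x, y) (mem_image_swap.1 he)
      simpa [add_comm] using this
    have hwnat2 : ∀ e ∈ E.image Prod.swap, ∃ n : ℕ, (w ∘ Prod.swap) e = (n : ℚ) := by
      rintro ⟨y, x⟩ he
      exact hwnat (x, y) (mem_image_swap.1 he)
    have hH2 : H.image Prod.swap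
        = (E.image Prod.swap).filter (fun e => (w ∘ Prod.swap) e = (v e.1 : ℚ) + (u e.2 : ℚ)) := by
      ext ⟨y, x⟩
      rw [mem_image_swap, Finset.mem_filter, Finset.mem_filter, mem_image_swap]
      constructor
      · rintro ⟨h1, h2⟩
        refine ⟨h1, ?_⟩
        show w (x, y) = (v y : ℚ) + (u x : ℚ)
        rw [h2]; ring
      · rintro ⟨h1, h2⟩
        refine ⟨h1, ?_⟩
        have h2' : w (x, y) = (v y : ℚ) + (u x : ℚ) := h2
        show w (x, y) = (u x : ℚ) + (v y : ℚ)
        rw [h2']; ring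
    have hMm2 : IsMatching (H.image Prod.swap) (M.image Prod.swap) := isMatching_swap hMm
    have hMmax2 : ∀ N, IsMatching (H.image Prod.swap) N →
        matchWeight (w ∘ Prod.swap) N ≤ matchWeight (w ∘ Prod.swap) (M.image Prod.swap) := by
      intro N hN
      rw [matchWeight_swap]
      have hN' : IsMatching H (N.image Prod.swap) := by
        have := isMatching_swap hN
        rwa [image_swap_swap] at this
      have h1 : matchWeight (w ∘ Prod.swap) N = matchWeight w (N.image Prod.swap) := by
        rw [← matchWeight_swap w (N.image Prod.swap), image_swap_swap]
      rw [h1]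
      exact hMmax _ hN'
    obtain ⟨v', u', hfeas', hlt⟩ := improve (E.image Prod.swap) (w ∘ Prod.swap) v u
      hfeas2 hwnat2 (H.image Prod.swap) hH2 (M.image Prod.swap) hMm2 hMmax2 j hexp hj
    have hfeas'' : ∀ e ∈ E, w e ≤ (u' e.1 : ℚ) + (v' e.2 : ℚ) := by
      rintro ⟨x, y⟩ he
      have := hfeas' (y, x) (mem_image_swap.2 he)
      simpa [add_comm] using this
    have : ((∑ i, u' i) + (∑ j, v' j)) ∈ S := ⟨u', v', hfeas'', rfl⟩
    have := Nat.sInf_le this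
    omega
  -- conclude
  have hME : IsMatching E M :=
    ⟨hMm.1.trans (by rw [hH]; exact Finset.filter_subset _ _), hMm.2.1, hMm.2.2⟩
  have htv : matchWeight w M =
      ∑ i ∈ M.image Prod.fst, (u i : ℚ) + ∑ j ∈ M.image Prod.snd, (v j : ℚ) :=
    matchWeight_eq_cov hMm _ _ (fun e he => by
      have := hMm.1 he
      rw [hH] at this
      exact (Finset.mem_filter.1 this).2)
  have hext1 : ∑ i ∈ M.image Prod.fst, (u i : ℚ) = ∑ i, (u i : ℚ) := by
    apply Finset.sum_subset (Finset.subset_univ _)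
    intro i _ hni
    have : ¬ 1 ≤ u i := fun hc => hni (hcovU i hc)
    have : u i = 0 := by omega
    simp [this]
  have hext2 : ∑ j ∈ M.image Prod.snd, (v j : ℚ) = ∑ j, (v j : ℚ) := by
    apply Finset.sum_subset (Finset.subset_univ _)
    intro j _ hnj
    have : ¬ 1 ≤ v j := fun hc => hnj (hcovV j hc)
    have : v j = 0 := by omega
    simp [this]
  refine ⟨fun i => (u i : ℚ), fun j => (v j : ℚ), fun i => Nat.cast_nonneg _,
    fun j => Nat.cast_nonneg _, hfeas, ?_⟩
  have hle1 : maxWeight E w ≤ ∑ i, (u i : ℚ) + ∑ j, (v j : ℚ) :=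
    maxWeight_le (fun N hN => weak_duality hN (fun i => Nat.cast_nonneg _)
      (fun j => Nat.cast_nonneg _) hfeas)
  have hle2 : ∑ i, (u i : ℚ) + ∑ j, (v j : ℚ) ≤ maxWeight E w := by
    rw [← hext1, ← hext2, ← htv]
    exact matchWeight_le_maxWeight hME
  linarith

end StrongDuality

section Scale
variable {U V : Type*} [Fintype U] [Fintype V] [DecidableEq U] [DecidableEq V]

lemma maxWeight_smul (E : Finset (U × V)) (w : U × V → ℚ) {c : ℚ} (hc : 0 < c) :
    maxWeight E (fun e => c * w e) = c * maxWeight E w := by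
  have hmw : ∀ M : Finset (U × V), matchWeight (fun e => c * w e) M = c * matchWeight w M := by
    intro M
    rw [matchWeight, matchWeight, Finset.mul_sum]
  apply le_antisymm
  · apply maxWeight_le
    intro M hM
    rw [hmw]
    exact mul_le_mul_of_nonneg_left (matchWeight_le_maxWeight hM) hc.le
  · obtain ⟨M, hMm, hMval⟩ := exists_isMaxMatching E w
    calc c * maxWeight E w = c * matchWeight w M := by rw [hMval]
    _ = matchWeight (fun e => c * w e) M := (hmw M).symm
    _ ≤ maxWeight E (fun e => c * w e) := matchWeight_le_maxWeight hMm

lemma exists_core (E : Finset (U × V)) (w : U × V → ℚ) (hw : ∀ e ∈ E, 0 ≤ w e) :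
    ∃ (u : U → ℚ) (v : V → ℚ), InCore E w u v := by
  set N : ℕ := ∏ e ∈ E, (w e).den with hN
  have hNpos : 0 < N := Finset.prod_pos (fun e _ => (w e).pos)
  have hNQ : (0:ℚ) < (N:ℚ) := by exact_mod_cast hNpos
  have hint : ∀ e ∈ E, ∃ n : ℕ, (N:ℚ) * w e = (n : ℚ) := by
    intro e he
    obtain ⟨k, hk⟩ : (w e).den ∣ N := Finset.dvd_prod_of_mem _ he
    have hden : ((w e).den : ℚ) ≠ 0 := by
      exact_mod_cast (w e).den_nz
    have h1' := Rat.num_div_den (w e)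
    rw [div_eq_iff hden] at h1'
    have h1 : ((w e).den : ℚ) * w e = ((w e).num : ℚ) := by rw [h1']; ring
    have h2 : (N:ℚ) * w e = (k : ℚ) * ((w e).num : ℚ) := by
      rw [hk]
      push_cast
      rw [mul_comm ((w e).den : ℚ) (k:ℚ), mul_assoc, h1]
    have hnum : 0 ≤ (w e).num := Rat.num_nonneg.2 (hw e he)
    refine ⟨k * (w e).num.toNat, ?_⟩
    have h3 : ((w e).num.toNat : ℚ) = ((w e).num : ℚ) := by
      exact_mod_cast Int.toNat_of_nonneg hnum
    rw [h2]
    push_cast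
    rw [h3]
  obtain ⟨u, v, hu, hv, hfeas, htot⟩ := exists_core_nat E (fun e => (N:ℚ) * w e) hint
  refine ⟨fun i => u i / N, fun j => v j / N, fun i => div_nonneg (hu i) hNQ.le,
    fun j => div_nonneg (hv j) hNQ.le, ?_, ?_⟩
  · intro e he
    have := hfeas e he
    rw [← add_div, le_div_iff₀ hNQ, mul_comm]
    exact this
  · rw [← Finset.sum_div, ← Finset.sum_div, ← add_div]
    rw [htot, maxWeight_smul E w hNQ]
    field_simp
end Scale

section Perturb
variable {U V : Type*} [Fintype U] [Fintype V] [DecidableEq U] [DecidableEq V]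

lemma singleton_matching {E : Finset (U × V)} {e : U × V} (he : e ∈ E) :
    IsMatching E {e} := by
  refine ⟨Finset.singleton_subset_iff.2 he, ?_, ?_⟩ <;>
    · intro x hx y hy _
      rw [Finset.mem_singleton] at hx hy
      rw [hx, hy]

/-- perturbed weight bump on a single unused edge gives a core point with slack -/
lemma exists_core_slack {E : Finset (U × V)} {w : U × V → ℚ} (hw : ∀ e ∈ E, 0 < w e)
    {e0 : U × V} (he0 : e0 ∈ E) (hnever : ¬ ∃ M, IsMaxMatching E w M ∧ e0 ∈ M) :
    ∃ (u : U → ℚ) (v : V → ℚ), InCore E w u v ∧ w e0 < u e0.1 + v e0.2 := by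
  set F := ((E.powerset).filter (fun M => IsMatching E M)).filter (fun M => e0 ∈ M) with hF
  have hFne : F.Nonempty :=
    ⟨{e0}, Finset.mem_filter.2 ⟨isMatching_mem_filter.2 (singleton_matching he0),
      Finset.mem_singleton_self e0⟩⟩
  set best := F.sup' hFne (matchWeight w) with hbest
  have hbestlt : best < maxWeight E w := by
    obtain ⟨M1, hM1, hval⟩ := Finset.exists_mem_eq_sup' hFne (matchWeight w)
    rw [hbest, hval]
    obtain ⟨hM1m, hM1e⟩ := Finset.mem_filter.1 hM1
    have hm : IsMatching E M1 := isMatching_mem_filter.1 hM1m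
    have hle := matchWeight_le_maxWeight (w := w) hm
    rcases lt_or_eq_of_le hle with h | h
    · exact h
    · exact absurd ⟨M1, ⟨hm, h⟩, hM1e⟩ hnever
  set δ := (maxWeight E w - best) / 2 with hδ
  have hδpos : 0 < δ := by rw [hδ]; linarith
  set w' : U × V → ℚ := fun e => if e = e0 then w e + δ else w e with hw'
  have hw'pos : ∀ e ∈ E, 0 ≤ w' e := by
    intro e he
    have h0 := hw e he
    have hb : w' e = if e = e0 then w e + δ else w e := rfl
    rw [hb]
    split <;> linarith
  have hmw : ∀ M : Finset (U × V),
      matchWeight w' M = matchWeight w M + (if e0 ∈ M then δ else 0) := by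
    intro M
    rw [matchWeight, matchWeight]
    have : ∀ e ∈ M, w' e = w e + (if e = e0 then δ else 0) := by
      intro e _
      have hb : w' e = if e = e0 then w e + δ else w e := rfl
      rw [hb]
      by_cases h : e = e0 <;> simp [h]
    rw [Finset.sum_congr rfl this, Finset.sum_add_distrib, Finset.sum_ite_eq' M e0 (fun _ => δ)]
  have hmax' : maxWeight E w' = maxWeight E w := by
    apply le_antisymm
    · apply maxWeight_le
      intro M hM
      rw [hmw]
      by_cases he : e0 ∈ M
      · have hMF : M ∈ F := Finset.mem_filter.2 ⟨isMatching_mem_filter.2 hM, he⟩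
        have : matchWeight w M ≤ best := Finset.le_sup' _ hMF
        rw [if_pos he, hδ]
        linarith
      · rw [if_neg he, add_zero]
        exact matchWeight_le_maxWeight hM
    · obtain ⟨M, hMm, hMval⟩ := exists_isMaxMatching E w
      have he0M : e0 ∉ M := fun hc => hnever ⟨M, ⟨hMm, hMval⟩, hc⟩
      calc maxWeight E w = matchWeight w' M := by rw [hmw, if_neg he0M, add_zero, hMval]
      _ ≤ maxWeight E w' := matchWeight_le_maxWeight hMm
  obtain ⟨u, v, hu, hv, hfeas, htot⟩ := exists_core E w' hw'pos
  refine ⟨u, v, ⟨hu, hv, ?_, by rw [htot, hmax']⟩, ?_⟩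
  · intro e he
    have h1 : (if e = e0 then w e + δ else w e) ≤ u e.1 + v e.2 := hfeas e he
    by_cases h : e = e0
    · rw [if_pos h] at h1; linarith
    · rwa [if_neg h] at h1
  · have h1 : (if e0 = e0 then w e0 + δ else w e0) ≤ u e0.1 + v e0.2 := hfeas e0 he0
    rw [if_pos rfl] at h1
    linarith

/-- helper : sum of an indicator of covering `i0` over a matching -/
lemma matching_cov_sum {E M : Finset (U × V)} (hM : IsMatching E M) (i0 : U) (c : ℚ) :
    ∑ e ∈ M, (if e.1 = i0 then c else 0)
      = if i0 ∈ M.image Prod.fst then c else 0 := by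
  by_cases hc : i0 ∈ M.image Prod.fst
  · obtain ⟨j0, hj0⟩ := mem_image_fst.1 hc
    have hfil : M.filter (fun e => e.1 = i0) = {(i0, j0)} := by
      ext e
      rw [Finset.mem_filter, Finset.mem_singleton]
      constructor
      · rintro ⟨he, hei⟩
        exact hM.2.1 e he _ hj0 (by rw [hei])
      · rintro rfl
        exact ⟨hj0, rfl⟩
    rw [← Finset.sum_filter, hfil, Finset.sum_singleton, if_pos hc]
  · rw [if_neg hc, ← Finset.sum_filter]
    have hfil : M.filter (fun e => e.1 = i0) = ∅ := by
      ext e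
      simp only [Finset.mem_filter, Finset.notMem_empty, iff_false, not_and]
      intro he hei
      exact hc (mem_image_fst.2 ⟨e.2, by rw [← hei]; exact he⟩)
    rw [hfil, Finset.sum_empty]

/-- a core point positive at an essential left vertex -/
lemma exists_core_pos_inl {E : Finset (U × V)} {w : U × V → ℚ} (hw : ∀ e ∈ E, 0 < w e)
    {i0 : U} (hess : EssentialVertex E w (Sum.inl i0)) :
    ∃ (u : U → ℚ) (v : V → ℚ), InCore E w u v ∧ 0 < u i0 := by
  obtain ⟨Mx, hMx⟩ := exists_isMaxMatching E w
  obtain ⟨jx, hjx⟩ : ∃ j, (i0, j) ∈ Mx := hess Mx hMx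
  set Einc := E.filter (fun e => e.1 = i0) with hEinc
  have hEincne : Einc.Nonempty := ⟨(i0, jx), Finset.mem_filter.2 ⟨hMx.1.1 hjx, rfl⟩⟩
  set m := Einc.inf' hEincne w with hm
  have hmpos : 0 < m := by
    obtain ⟨e1, he1, hval⟩ := Finset.exists_mem_eq_inf' hEincne w
    rw [hm, hval]
    exact hw e1 (Finset.mem_filter.1 he1).1
  set F0 := ((E.powerset).filter (fun M => IsMatching E M)).filter
    (fun M => i0 ∉ M.image Prod.fst) with hF0
  have hF0ne : F0.Nonempty := ⟨∅, by simp [hF0, IsMatching]⟩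
  set best0 := F0.sup' hF0ne (matchWeight w) with hbest0
  have hbest0lt : best0 < maxWeight E w := by
    obtain ⟨M0, hM0, hval⟩ := Finset.exists_mem_eq_sup' hF0ne (matchWeight w)
    rw [hbest0, hval]
    obtain ⟨hM0m, hM0e⟩ := Finset.mem_filter.1 hM0
    have hm0 : IsMatching E M0 := isMatching_mem_filter.1 hM0m
    rcases lt_or_eq_of_le (matchWeight_le_maxWeight (w := w) hm0) with h | h
    · exact h
    · obtain ⟨j, hj⟩ := hess M0 ⟨hm0, h⟩
      exact absurd (mem_image_fst.2 ⟨j, hj⟩) hM0e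
  set δ := min ((maxWeight E w - best0) / 2) (m / 2) with hδ
  have hδpos : 0 < δ := by
    rw [hδ]
    apply lt_min <;> linarith
  have hδm : δ < m := by
    have : δ ≤ m / 2 := min_le_right _ _
    linarith
  have hδb : best0 ≤ maxWeight E w - 2 * δ := by
    have : δ ≤ (maxWeight E w - best0) / 2 := min_le_left _ _
    linarith
  set w' : U × V → ℚ := fun e => if e.1 = i0 then w e - δ else w e with hw'
  have hw'pos : ∀ e ∈ E, 0 ≤ w' e := by
    intro e he
    have hb : w' e = if e.1 = i0 then w e - δ else w e := rfl
    rw [hb]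
    split
    · rename_i h
      have : m ≤ w e := Finset.inf'_le _ (Finset.mem_filter.2 ⟨he, h⟩)
      linarith
    · have := hw e he; linarith
  have hmw : ∀ M : Finset (U × V), IsMatching E M →
      matchWeight w' M = matchWeight w M - (if i0 ∈ M.image Prod.fst then δ else 0) := by
    intro M hM
    rw [matchWeight, matchWeight, ← matching_cov_sum hM i0 δ, ← Finset.sum_sub_distrib]
    apply Finset.sum_congr rfl
    intro e _
    have hb : w' e = if e.1 = i0 then w e - δ else w e := rfl
    rw [hb]
    by_cases h : e.1 = i0 <;> simp [h]
  have hmax' : maxWeight E w' = maxWeight E w - δ := by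
    apply le_antisymm
    · apply maxWeight_le
      intro M hM
      rw [hmw M hM]
      by_cases hcov : i0 ∈ M.image Prod.fst
      · rw [if_pos hcov]
        have := matchWeight_le_maxWeight (w := w) hM
        linarith
      · rw [if_neg hcov, sub_zero]
        have hMF : M ∈ F0 := Finset.mem_filter.2 ⟨isMatching_mem_filter.2 hM, hcov⟩
        have : matchWeight w M ≤ best0 := Finset.le_sup' _ hMF
        linarith
    · have hcov : i0 ∈ Mx.image Prod.fst := mem_image_fst.2 ⟨jx, hjx⟩
      calc maxWeight E w - δ = matchWeight w' Mx := by
            rw [hmw Mx hMx.1, if_pos hcov, hMx.2]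
      _ ≤ maxWeight E w' := matchWeight_le_maxWeight hMx.1
  obtain ⟨u, v, hu, hv, hfeas, htot⟩ := exists_core E w' hw'pos
  refine ⟨fun i => if i = i0 then u i + δ else u i, v, ⟨?_, hv, ?_, ?_⟩, ?_⟩
  · intro i
    have := hu i
    dsimp only
    split <;> linarith
  · intro e he
    have h1 : (if e.1 = i0 then w e - δ else w e) ≤ u e.1 + v e.2 := hfeas e he
    dsimp only
    by_cases h : e.1 = i0
    · rw [if_pos h] at h1
      rw [if_pos h]
      linarith
    · rw [if_neg h] at h1
      rw [if_neg h]
      linarith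
  · have hsplit : ∑ i, (if i = i0 then u i + δ else u i)
        = (∑ i, u i) + δ := by
      have : ∀ i ∈ Finset.univ, (if i = i0 then u i + δ else u i)
          = u i + (if i = i0 then δ else 0) := by
        intro i _
        split <;> simp
      rw [Finset.sum_congr rfl this, Finset.sum_add_distrib,
        Finset.sum_ite_eq' Finset.univ i0 (fun _ => δ), if_pos (Finset.mem_univ _)]
    rw [hsplit]
    rw [hmax'] at htot
    linarith
  · dsimp only
    rw [if_pos rfl]
    have := hu i0
    linarith

end Perturb

section Transport
variable {U V : Type*} [Fintype U] [Fintype V] [DecidableEq U] [DecidableEq V]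

lemma maxWeight_swap (E : Finset (U × V)) (w : U × V → ℚ) :
    maxWeight (E.image Prod.swap) (w ∘ Prod.swap) = maxWeight E w := by
  apply le_antisymm
  · apply maxWeight_le
    intro N hN
    have hN' : IsMatching E (N.image Prod.swap) := by
      have := isMatching_swap hN
      rwa [image_swap_swap] at this
    have h1 : matchWeight (w ∘ Prod.swap) N = matchWeight w (N.image Prod.swap) := by
      rw [← matchWeight_swap w (N.image Prod.swap), image_swap_swap]
    rw [h1]
    exact matchWeight_le_maxWeight hN'
  · apply maxWeight_le
    intro M hM
    rw [← matchWeight_swap w M]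
    exact matchWeight_le_maxWeight (isMatching_swap hM)

lemma inCore_unswap {E : Finset (U × V)} {w : U × V → ℚ} {u' : V → ℚ} {v' : U → ℚ}
    (h : InCore (E.image Prod.swap) (w ∘ Prod.swap) u' v') : InCore E w v' u' := by
  obtain ⟨h1, h2, h3, h4⟩ := h
  refine ⟨h2, h1, ?_, ?_⟩
  · rintro ⟨i, j⟩ he
    have := h3 (j, i) (mem_image_swap.2 he)
    have h5 : (w ∘ Prod.swap) (j, i) = w (i, j) := rfl
    rw [h5] at this
    dsimp at this ⊢
    linarith
  · rw [← maxWeight_swap E w, ← h4]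
    ring

lemma exists_core_pos_inr {E : Finset (U × V)} {w : U × V → ℚ} (hw : ∀ e ∈ E, 0 < w e)
    {j0 : V} (hess : EssentialVertex E w (Sum.inr j0)) :
    ∃ (u : U → ℚ) (v : V → ℚ), InCore E w u v ∧ 0 < v j0 := by
  have hw2 : (w ∘ Prod.swap) ∘ Prod.swap = w := by
    funext e
    simp
  have hw' : ∀ e ∈ E.image Prod.swap, 0 < (w ∘ Prod.swap) e := by
    rintro ⟨j, i⟩ he
    exact hw (i, j) (mem_image_swap.1 he)
  have hess' : EssentialVertex (E.image Prod.swap) (w ∘ Prod.swap) (Sum.inl j0) := by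
    intro N hN
    have hNE : IsMatching E (N.image Prod.swap) := by
      have := isMatching_swap hN.1
      rwa [image_swap_swap] at this
    have hNmax : IsMaxMatching E w (N.image Prod.swap) := by
      refine ⟨hNE, ?_⟩
      have h1 : matchWeight (w ∘ Prod.swap) N = matchWeight w (N.image Prod.swap) := by
        rw [← matchWeight_swap w (N.image Prod.swap), image_swap_swap]
      rw [← h1, hN.2, maxWeight_swap]
    obtain ⟨i, hi⟩ := hess (N.image Prod.swap) hNmax
    exact ⟨i, mem_image_swap.1 hi⟩
  obtain ⟨u', v', hc, hpos⟩ := exists_core_pos_inl hw' hess'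
  exact ⟨v', u', inCore_unswap hc, hpos⟩

end Transport

section Average
variable {U V : Type*} [Fintype U] [Fintype V] [DecidableEq U] [DecidableEq V]

lemma average_core {E : Finset (U × V)} {w : U × V → ℚ}
    {ι : Type*} [Fintype ι] [Nonempty ι] (f : ι → (U → ℚ) × (V → ℚ))
    (hf : ∀ x, InCore E w (f x).1 (f x).2) :
    InCore E w (fun i => (∑ x, (f x).1 i) / (Fintype.card ι : ℚ))
      (fun j => (∑ x, (f x).2 j) / (Fintype.card ι : ℚ)) := by
  have hk : (0:ℚ) < (Fintype.card ι : ℚ) := by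
    exact_mod_cast Fintype.card_pos
  refine ⟨fun i => div_nonneg (Finset.sum_nonneg fun x _ => (hf x).1 i) hk.le,
    fun j => div_nonneg (Finset.sum_nonneg fun x _ => (hf x).2.1 j) hk.le, ?_, ?_⟩
  · intro e he
    dsimp only
    rw [← add_div, le_div_iff₀ hk]
    have h1 : ∑ x : ι, w e ≤ ∑ x : ι, ((f x).1 e.1 + (f x).2 e.2) :=
      Finset.sum_le_sum (fun x _ => (hf x).2.2.1 e he)
    rw [Finset.sum_const, Finset.card_univ, nsmul_eq_mul] at h1
    rw [← Finset.sum_add_distrib]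
    linarith
  · have h2 : ∑ i, ∑ x : ι, (f x).1 i = ∑ x : ι, ∑ i, (f x).1 i := Finset.sum_comm
    have h3 : ∑ j, ∑ x : ι, (f x).2 j = ∑ x : ι, ∑ j, (f x).2 j := Finset.sum_comm
    rw [← Finset.sum_div, ← Finset.sum_div, ← add_div, h2, h3, ← Finset.sum_add_distrib]
    have h4 : ∀ x ∈ (Finset.univ : Finset ι),
        (∑ i, (f x).1 i) + (∑ j, (f x).2 j) = maxWeight E w := fun x _ => (hf x).2.2.2
    rw [Finset.sum_congr rfl h4, Finset.sum_const, Finset.card_univ, nsmul_eq_mul]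
    field_simp

end Average

section Main
variable {U V : Type*} [Fintype U] [Fintype V] [DecidableEq U] [DecidableEq V]

lemma tightAdj_symm {E : Finset (U × V)} {w : U × V → ℚ} :
    Symmetric (TightAdj E w) := by
  rintro q q' ⟨e, he, hM, hc | hc⟩
  · exact ⟨e, he, hM, Or.inr ⟨hc.2, hc.1⟩⟩
  · exact ⟨e, he, hM, Or.inl ⟨hc.2, hc.1⟩⟩

lemma propagate {E : Finset (U × V)} {w : U × V → ℚ}
    {u u' : U → ℚ} {v v' : V → ℚ}
    (hc1 : InCore E w u v) (hc2 : InCore E w u' v')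
    {x y : U ⊕ V} (hpath : Relation.ReflTransGen (TightAdj E w) x y)
    (hx : Sum.elim u v x = Sum.elim u' v' x) :
    Sum.elim u v y = Sum.elim u' v' y := by
  induction hpath with
  | refl => exact hx
  | tail h1 h2 ih =>
    obtain ⟨e, heE, ⟨M, hMmax, heM⟩, hcase⟩ := h2
    have t1 : w e = u e.1 + v e.2 := (comp_slack hc1 hMmax).1 e heM
    have t2 : w e = u' e.1 + v' e.2 := (comp_slack hc2 hMmax).1 e heM
    rcases hcase with ⟨hx1, hy1⟩ | ⟨hx1, hy1⟩ <;> rw [hx1] at ih <;> rw [hy1] <;>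
      simp only [Sum.elim_inl, Sum.elim_inr] at ih ⊢ <;> linarith

theorem fundamental_iff_all_essential' {E : Finset (U × V)} {w : U × V → ℚ}
    (hw : ∀ e ∈ E, 0 < w e) (q0 : U ⊕ V) :
    (∃ (u : U → ℚ) (v : V → ℚ) (u' : U → ℚ) (v' : V → ℚ),
        InCore E w u v ∧ InCore E w u' v' ∧
        ∃ q : U ⊕ V, Relation.ReflTransGen (TightAdj E w) q0 q ∧
          Sum.elim u v q ≠ Sum.elim u' v' q) ↔
      (∀ q : U ⊕ V, Relation.ReflTransGen (TightAdj E w) q0 q →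
        EssentialVertex E w q) := by
  constructor
  · rintro ⟨u, v, u', v', hc1, hc2, q1, hq1, hne⟩ q hq
    by_contra hness
    have hbase : Sum.elim u v q = Sum.elim u' v' q := by
      rw [inessential_zero hc1 hness, inessential_zero hc2 hness]
    have hsym : Relation.ReflTransGen (TightAdj E w) q q0 := by
      haveI : Std.Symm (TightAdj E w) := ⟨fun a b h => tightAdj_symm h⟩
      exact Std.Symm.symm _ _ hq
    exact hne (propagate hc1 hc2 (hsym.trans hq1) hbase)
  · intro hall
    -- the averaged relative-interior core point
    obtain ⟨M0, hM0⟩ := exists_isMaxMatching E w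
    obtain ⟨ub, vb, hbase⟩ := exists_core E w (fun e he => (hw e he).le)
    classical
    set f : ((U × V) ⊕ ((U ⊕ V) ⊕ Unit)) → (U → ℚ) × (V → ℚ) := fun x =>
      match x with
      | Sum.inl e =>
        if h : e ∈ E ∧ ¬ ∃ M, IsMaxMatching E w M ∧ e ∈ M then
          ⟨(exists_core_slack hw h.1 h.2).choose,
            (exists_core_slack hw h.1 h.2).choose_spec.choose⟩
        else (ub, vb)
      | Sum.inr (Sum.inl (Sum.inl i)) =>
        if h : EssentialVertex E w (Sum.inl i) then
          ⟨(exists_core_pos_inl hw h).choose, (exists_core_pos_inl hw h).choose_spec.choose⟩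
        else (ub, vb)
      | Sum.inr (Sum.inl (Sum.inr j)) =>
        if h : EssentialVertex E w (Sum.inr j) then
          ⟨(exists_core_pos_inr hw h).choose, (exists_core_pos_inr hw h).choose_spec.choose⟩
        else (ub, vb)
      | Sum.inr (Sum.inr _) => (ub, vb) with hf
    have hfcore : ∀ x, InCore E w (f x).1 (f x).2 := by
      intro x
      match x with
      | Sum.inl e =>
        by_cases h : e ∈ E ∧ ¬ ∃ M, IsMaxMatching E w M ∧ e ∈ M
        · simp only [hf, dif_pos h]
          exact (exists_core_slack hw h.1 h.2).choose_spec.choose_spec.1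
        · simp only [hf, dif_neg h]
          exact hbase
      | Sum.inr (Sum.inl (Sum.inl i)) =>
        by_cases h : EssentialVertex E w (Sum.inl i)
        · simp only [hf, dif_pos h]
          exact (exists_core_pos_inl hw h).choose_spec.choose_spec.1
        · simp only [hf, dif_neg h]
          exact hbase
      | Sum.inr (Sum.inl (Sum.inr j)) =>
        by_cases h : EssentialVertex E w (Sum.inr j)
        · simp only [hf, dif_pos h]
          exact (exists_core_pos_inr hw h).choose_spec.choose_spec.1
        · simp only [hf, dif_neg h]
          exact hbase
      | Sum.inr (Sum.inr _) => exact hbase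
    set k : ℚ := (Fintype.card ((U × V) ⊕ ((U ⊕ V) ⊕ Unit)) : ℚ) with hk
    have hkpos : 0 < k := by
      rw [hk]; exact_mod_cast Fintype.card_pos
    set us : U → ℚ := fun i => (∑ x, (f x).1 i) / k with hus
    set vs : V → ℚ := fun j => (∑ x, (f x).2 j) / k with hvs
    have hcore : InCore E w us vs := average_core f hfcore
    -- strict slack on never-matched edges
    have hslack : ∀ e ∈ E, (¬ ∃ M, IsMaxMatching E w M ∧ e ∈ M) →
        w e < us e.1 + vs e.2 := by
      intro e he hnever
      have hϕ : us e.1 + vs e.2 = (∑ x, ((f x).1 e.1 + (f x).2 e.2)) / k := by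
        rw [hus, hvs]
        rw [← add_div, Finset.sum_add_distrib]
      rw [hϕ, lt_div_iff₀ hkpos]
      have hstrict : ∑ x : ((U × V) ⊕ ((U ⊕ V) ⊕ Unit)), w e
          < ∑ x, ((f x).1 e.1 + (f x).2 e.2) := by
        apply Finset.sum_lt_sum
        · intro x _
          exact (hfcore x).2.2.1 e he
        · refine ⟨Sum.inl e, Finset.mem_univ _, ?_⟩
          have h : e ∈ E ∧ ¬ ∃ M, IsMaxMatching E w M ∧ e ∈ M := ⟨he, hnever⟩
          simp only [hf, dif_pos h]
          exact (exists_core_slack hw h.1 h.2).choose_spec.choose_spec.2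
      rw [Finset.sum_const, Finset.card_univ, nsmul_eq_mul] at hstrict
      calc w e * k = k * w e := by ring
      _ < _ := by rw [hk]; exact hstrict
    -- positivity at essential vertices
    have hposl : ∀ i : U, EssentialVertex E w (Sum.inl i) → 0 < us i := by
      intro i hq
      rw [hus]
      apply div_pos _ hkpos
      apply Finset.sum_pos'
      · intro x _
        exact (hfcore x).1 i
      · refine ⟨Sum.inr (Sum.inl (Sum.inl i)), Finset.mem_univ _, ?_⟩
        simp only [hf, dif_pos hq]
        exact (exists_core_pos_inl hw hq).choose_spec.choose_spec.2
    have hposr : ∀ j : V, EssentialVertex E w (Sum.inr j) → 0 < vs j := by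
      intro j hq
      rw [hvs]
      apply div_pos _ hkpos
      apply Finset.sum_pos'
      · intro x _
        exact (hfcore x).2.1 j
      · refine ⟨Sum.inr (Sum.inl (Sum.inr j)), Finset.mem_univ _, ?_⟩
        simp only [hf, dif_pos hq]
        exact (exists_core_pos_inr hw hq).choose_spec.choose_spec.2
    -- the component
    set CU : Finset U := Finset.univ.filter
      (fun i => Relation.ReflTransGen (TightAdj E w) q0 (Sum.inl i)) with hCU
    set CV : Finset V := Finset.univ.filter
      (fun j => Relation.ReflTransGen (TightAdj E w) q0 (Sum.inr j)) with hCV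
    have hCm : ∀ i ∈ CU, ∃ j, (i, j) ∈ M0 :=
      fun i hi => hall (Sum.inl i) (Finset.mem_filter.1 hi).2 M0 hM0
    have hCmV : ∀ j ∈ CV, ∃ i, (i, j) ∈ M0 :=
      fun j hj => hall (Sum.inr j) (Finset.mem_filter.1 hj).2 M0 hM0
    have hadj : ∀ e ∈ M0, TightAdj E w (Sum.inl e.1) (Sum.inr e.2) :=
      fun e he => ⟨e, hM0.1.1 he, ⟨M0, hM0, he⟩, Or.inl ⟨rfl, rfl⟩⟩
    have hcards : CU.card = CV.card := by
      refine Finset.card_bij (fun i hi => (hCm i hi).choose) ?_ ?_ ?_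
      · intro i hi
        have hmem : (i, (hCm i hi).choose) ∈ M0 := (hCm i hi).choose_spec
        refine Finset.mem_filter.2 ⟨Finset.mem_univ _, ?_⟩
        exact Relation.ReflTransGen.tail (Finset.mem_filter.1 hi).2 (hadj _ hmem)
      · intro i1 hi1 i2 hi2 heq
        have h1 : (i1, (hCm i1 hi1).choose) ∈ M0 := (hCm i1 hi1).choose_spec
        have h2 : (i2, (hCm i2 hi2).choose) ∈ M0 := (hCm i2 hi2).choose_spec
        have heq' : (hCm i1 hi1).choose = (hCm i2 hi2).choose := heq
        rw [heq'] at h1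
        exact congrArg Prod.fst (hM0.1.2.2 _ h1 _ h2 rfl)
      · intro j hj
        obtain ⟨i, hij⟩ := hCmV j hj
        have hiCU : i ∈ CU := by
          refine Finset.mem_filter.2 ⟨Finset.mem_univ _, ?_⟩
          exact Relation.ReflTransGen.tail (Finset.mem_filter.1 hj).2
            (tightAdj_symm (hadj (i, j) hij))
        refine ⟨i, hiCU, ?_⟩
        have h1 : (i, (hCm i hiCU).choose) ∈ M0 := (hCm i hiCU).choose_spec
        exact congrArg Prod.snd (hM0.1.2.1 _ h1 _ hij rfl)
    -- choice of ε
    set Scr : Finset (U × V) := E.filter (fun e =>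
      Relation.ReflTransGen (TightAdj E w) q0 (Sum.inl e.1) ∧
        ¬ Relation.ReflTransGen (TightAdj E w) q0 (Sum.inr e.2)) with hScr
    set S : Finset ℚ := (CU.image us) ∪ (Scr.image (fun e => us e.1 + vs e.2 - w e)) with hSdef
    have hSpos : ∀ c ∈ S, 0 < c := by
      intro c hc
      rcases Finset.mem_union.1 hc with h | h
      · obtain ⟨i, hi, rfl⟩ := Finset.mem_image.1 h
        exact hposl i (hall (Sum.inl i) (Finset.mem_filter.1 hi).2)
      · obtain ⟨e, he, rfl⟩ := Finset.mem_image.1 h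
        obtain ⟨heE, hreach, hnreach⟩ := Finset.mem_filter.1 he
        have hnever : ¬ ∃ M, IsMaxMatching E w M ∧ e ∈ M := by
          rintro ⟨M, hMmax, heM⟩
          exact hnreach (Relation.ReflTransGen.tail hreach
            ⟨e, heE, ⟨M, hMmax, heM⟩, Or.inl ⟨rfl, rfl⟩⟩)
        have := hslack e heE hnever
        linarith
    set ε : ℚ := if hS : S.Nonempty then S.min' hS else 1 with hε
    have hεpos : 0 < ε := by
      rw [hε]
      split
      · rename_i hS
        exact hSpos _ (S.min'_mem hS)
      · norm_num
    have hεle : ∀ c ∈ S, ε ≤ c := by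
      intro c hc
      rw [hε]
      rw [dif_pos ⟨c, hc⟩]
      exact S.min'_le c hc
    -- the shifted core point
    set us' : U → ℚ := fun i => if i ∈ CU then us i - ε else us i with hus'
    set vs' : V → ℚ := fun j => if j ∈ CV then vs j + ε else vs j with hvs'
    have hcore' : InCore E w us' vs' := by
      refine ⟨?_, ?_, ?_, ?_⟩
      · intro i
        have hb : us' i = if i ∈ CU then us i - ε else us i := rfl
        rw [hb]
        split
        · rename_i hi
          have : ε ≤ us i := hεle _ (Finset.mem_union_left _ (Finset.mem_image_of_mem us hi))
          linarith
        · exact hcore.1 i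
      · intro j
        have hb : vs' j = if j ∈ CV then vs j + ε else vs j := rfl
        rw [hb]
        have := hcore.2.1 j
        split <;> linarith
      · rintro ⟨i, j⟩ he
        have hfe := hcore.2.2.1 (i, j) he
        dsimp only at hfe
        have hbu : us' i = if i ∈ CU then us i - ε else us i := rfl
        have hbv : vs' j = if j ∈ CV then vs j + ε else vs j := rfl
        show w (i, j) ≤ us' i + vs' j
        rw [hbu, hbv]
        by_cases hi : i ∈ CU
        · by_cases hj : j ∈ CV
          · rw [if_pos hi, if_pos hj]
            linarith
          · rw [if_pos hi, if_neg hj]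
            have hecr : (i, j) ∈ Scr := Finset.mem_filter.2 ⟨he,
              (Finset.mem_filter.1 hi).2, fun hc => hj (Finset.mem_filter.2 ⟨Finset.mem_univ _, hc⟩)⟩
            have : ε ≤ us i + vs j - w (i, j) := hεle _ (Finset.mem_union_right _
              (Finset.mem_image_of_mem _ hecr))
            linarith
        · rw [if_neg hi]
          split <;> linarith
      · have h1 : ∑ i, us' i = (∑ i, us i) - ε * CU.card := by
          have hpt : ∀ i ∈ (Finset.univ : Finset U),
              us' i = us i - (if i ∈ CU then ε else 0) := by
            intro i _
            have hb : us' i = if i ∈ CU then us i - ε else us i := rfl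
            rw [hb]
            split <;> simp
          rw [Finset.sum_congr rfl hpt, Finset.sum_sub_distrib, Finset.sum_ite_mem,
            Finset.univ_inter, Finset.sum_const, nsmul_eq_mul]
          ring
        have h2 : ∑ j, vs' j = (∑ j, vs j) + ε * CV.card := by
          have hpt : ∀ j ∈ (Finset.univ : Finset V),
              vs' j = vs j + (if j ∈ CV then ε else 0) := by
            intro j _
            have hb : vs' j = if j ∈ CV then vs j + ε else vs j := rfl
            rw [hb]
            split <;> simp
          rw [Finset.sum_congr rfl hpt, Finset.sum_add_distrib, Finset.sum_ite_mem,
            Finset.univ_inter, Finset.sum_const, nsmul_eq_mul]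
          ring
        rw [h1, h2, hcards]
        have := hcore.2.2.2
        linarith
    -- the two core points differ at q0
    refine ⟨us, vs, us', vs', hcore, hcore', q0, Relation.ReflTransGen.refl, ?_⟩
    cases q0 with
    | inl i =>
      have hi : i ∈ CU := Finset.mem_filter.2 ⟨Finset.mem_univ _, Relation.ReflTransGen.refl⟩
      have hb : us' i = if i ∈ CU then us i - ε else us i := rfl
      simp only [Sum.elim_inl]
      rw [hb, if_pos hi]
      intro hc
      linarith
    | inr j =>
      have hj : j ∈ CV := Finset.mem_filter.2 ⟨Finset.mem_univ _, Relation.ReflTransGen.refl⟩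
      have hb : vs' j = if j ∈ CV then vs j + ε else vs j := rfl
      simp only [Sum.elim_inr]
      rw [hb, if_pos hj]
      intro hc
      linarith

end Main

/-- A connected component of the subgraph of essential and viable edges is
fundamental (admits more than one core imputation restricted to it) iff all
its vertices are essential. -/
theorem fundamental_iff_all_essential {U V : Type*} [Fintype U] [Fintype V]
    [DecidableEq U] [DecidableEq V]
    (E : Finset (U × V)) (w : U × V → ℚ) (hw : ∀ e ∈ E, 0 < w e)
    (q0 : U ⊕ V) :
    (∃ (u : U → ℚ) (v : V → ℚ) (u' : U → ℚ) (v' : V → ℚ),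
        InCore E w u v ∧ InCore E w u' v' ∧
        ∃ q : U ⊕ V, Relation.ReflTransGen (TightAdj E w) q0 q ∧
          Sum.elim u v q ≠ Sum.elim u' v' q) ↔
      (∀ q : U ⊕ V, Relation.ReflTransGen (TightAdj E w) q0 q →
        EssentialVertex E w q) :=
  fundamental_iff_all_essential' hw q0
end

section
/- For each vertex i ∈ U of the assignment game, let u_i^h (resp. u_i^l) be the supremum (resp. infimum) of i's profit over all core imputations, and similarly define v^h, v^l for V. Then (u^h, v^l) and (u^l, v^h) are themselves core imputations. -/
/-!
The core is a sublattice: the componentwise `(max, min)` and `(min, max)` of two optimal dual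
solutions are again dual feasible, their costs add up to twice the optimum, and by weak duality
neither costs less than the optimum. Choosing, for every vertex, a core imputation at which the
profit of that vertex is extreme, the lattice supremum (resp. infimum) of these finitely many
imputations lies in the core and attains all the extremes at once.
-/

open scoped Classical

open Finset OrderDual

section OrderTheory

variable {ι κ α β : Type*} [Finite ι] [Finite κ]

theorem SupClosed.mem_of_forall_isGreatest [SemilatticeSup α] [SemilatticeSup β]
    {S : Set ((ι → α) × (κ → β))} (hS : SupClosed S) (hne : S.Nonempty) {a : ι → α} {b : κ → β}
    (ha : ∀ i, IsGreatest ((fun p => p.1 i) '' S) (a i))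
    (hb : ∀ j, IsGreatest ((fun p => p.2 j) '' S) (b j)) :
    (a, b) ∈ S := by
  choose f hfS hfa using fun i => (ha i).1
  choose g hgS hgb using fun j => (hb j).1
  obtain ⟨p₀, hp₀⟩ := hne
  have : Fintype (Option (ι ⊕ κ)) := Fintype.ofFinite _
  let F : Option (ι ⊕ κ) → (ι → α) × (κ → β) := fun o => o.elim p₀ (Sum.elim f g)
  set P := univ.sup' univ_nonempty F
  have hPS : P ∈ S := hS.finsetSup'_mem _ fun o _ => by
    rcases o with _ | i | j
    exacts [hp₀, hfS i, hgS j]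
  have hFP (o) : F o ≤ P := le_sup' F (mem_univ o)
  convert hPS using 1
  refine Prod.ext (funext fun i => le_antisymm ?_ ((ha i).2 ⟨P, hPS, rfl⟩))
    (funext fun j => le_antisymm ?_ ((hb j).2 ⟨P, hPS, rfl⟩))
  · exact (hfa i).symm.le.trans ((hFP (some (.inl i))).1 i)
  · exact (hgb j).symm.le.trans ((hFP (some (.inr j))).2 j)

theorem InfClosed.mem_of_forall_isLeast [SemilatticeInf α] [SemilatticeInf β]
    {S : Set ((ι → α) × (κ → β))} (hS : InfClosed S) (hne : S.Nonempty) {a : ι → α} {b : κ → β}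
    (ha : ∀ i, IsLeast ((fun p => p.1 i) '' S) (a i))
    (hb : ∀ j, IsLeast ((fun p => p.2 j) '' S) (b j)) :
    (a, b) ∈ S :=
  SupClosed.mem_of_forall_isGreatest (α := αᵒᵈ) (β := βᵒᵈ) (S := S) (fun _ hp _ hq => hS hp hq) hne
    (fun i => (ha i).dual) (fun j => (hb j).dual)

theorem le_sup_add_inf_of_le_add {γ : Type*} [AddCommGroup γ] [LinearOrder γ] [IsOrderedAddMonoid γ]
    {c x x' y y' : γ} (h : c ≤ x + y) (h' : c ≤ x' + y') : c ≤ (x ⊔ x') + (y ⊓ y') := by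
  rw [add_inf]
  exact le_inf (h.trans (by gcongr; exact le_sup_left)) (h'.trans (by gcongr; exact le_sup_right))

end OrderTheory

section AssignmentGame

variable {U V : Type*} {E : Finset (U × V)} {w : U × V → ℚ}

theorem IsMatching.sum_fst_le [Fintype U] [DecidableEq U] {M : Finset (U × V)}
    (hM : IsMatching E M) {u : U → ℚ} (hu : ∀ i, 0 ≤ u i) : ∑ e ∈ M, u e.1 ≤ ∑ i, u i := by
  rw [← sum_image fun e he e' he' => hM.2.1 e he e' he']
  exact sum_le_univ_sum_of_nonneg hu

theorem IsMatching.sum_snd_le [Fintype V] [DecidableEq V] {M : Finset (U × V)}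
    (hM : IsMatching E M) {v : V → ℚ} (hv : ∀ j, 0 ≤ v j) : ∑ e ∈ M, v e.2 ≤ ∑ j, v j := by
  rw [← sum_image fun e he e' he' => hM.2.2 e he e' he']
  exact sum_le_univ_sum_of_nonneg hv

variable [DecidableEq U] [DecidableEq V]

theorem maxWeight_nonneg : 0 ≤ maxWeight E w :=
  le_sup'_of_le _ (mem_filter.2 ⟨empty_mem_powerset E, by simp [IsMatching]⟩) le_rfl

variable [Fintype U] [Fintype V]

theorem maxWeight_le_sum_add_sum {u : U → ℚ} {v : V → ℚ} (hu : ∀ i, 0 ≤ u i) (hv : ∀ j, 0 ≤ v j)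
    (hcover : ∀ e ∈ E, w e ≤ u e.1 + v e.2) : maxWeight E w ≤ ∑ i, u i + ∑ j, v j := by
  refine sup'_le _ _ fun M hM => ?_
  have hM : IsMatching E M := (mem_filter.1 hM).2
  calc matchWeight w M ≤ ∑ e ∈ M, (u e.1 + v e.2) := sum_le_sum fun e he => hcover e (hM.1 he)
    _ = ∑ e ∈ M, u e.1 + ∑ e ∈ M, v e.2 := sum_add_distrib
    _ ≤ ∑ i, u i + ∑ j, v j := add_le_add (hM.sum_fst_le hu) (hM.sum_snd_le hv)

theorem inCore_zero_of_isEmpty [IsEmpty U] [IsEmpty V] : InCore E w 0 0 := by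
  have hcover : ∀ e ∈ E, w e ≤ (0 : U → ℚ) e.1 + (0 : V → ℚ) e.2 := fun e _ => isEmptyElim e.1
  have hle := maxWeight_le_sum_add_sum (fun _ => le_rfl) (fun _ => le_rfl) hcover
  refine ⟨fun _ => le_rfl, fun _ => le_rfl, hcover, ?_⟩
  simp only [univ_eq_empty, sum_empty, add_zero] at hle ⊢
  exact (hle.antisymm maxWeight_nonneg).symm

theorem InCore.sup_inf {u u' : U → ℚ} {v v' : V → ℚ} (h : InCore E w u v)
    (h' : InCore E w u' v') : InCore E w (u ⊔ u') (v ⊓ v') ∧ InCore E w (u ⊓ u') (v ⊔ v') := by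
  obtain ⟨hu, hv, hcover, hsum⟩ := h
  obtain ⟨hu', hv', hcover', hsum'⟩ := h'
  have hsup_nonneg i : 0 ≤ (u ⊔ u') i := (hu i).trans le_sup_left
  have hinf_nonneg i : 0 ≤ (u ⊓ u') i := le_inf (hu i) (hu' i)
  have hsup_nonneg' j : 0 ≤ (v ⊔ v') j := (hv j).trans le_sup_left
  have hinf_nonneg' j : 0 ≤ (v ⊓ v') j := le_inf (hv j) (hv' j)
  have hcover_sup_inf : ∀ e ∈ E, w e ≤ (u ⊔ u') e.1 + (v ⊓ v') e.2 := fun e he =>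
    le_sup_add_inf_of_le_add (hcover e he) (hcover' e he)
  have hcover_inf_sup : ∀ e ∈ E, w e ≤ (u ⊓ u') e.1 + (v ⊔ v') e.2 := fun e he => by
    rw [add_comm]
    exact le_sup_add_inf_of_le_add ((hcover e he).trans_eq (add_comm _ _))
      ((hcover' e he).trans_eq (add_comm _ _))
  have hU : ∑ i, (u ⊔ u') i + ∑ i, (u ⊓ u') i = ∑ i, u i + ∑ i, u' i := by
    simp only [← sum_add_distrib, Pi.sup_apply, Pi.inf_apply, max_add_min]
  have hV : ∑ j, (v ⊔ v') j + ∑ j, (v ⊓ v') j = ∑ j, v j + ∑ j, v' j := by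
    simp only [← sum_add_distrib, Pi.sup_apply, Pi.inf_apply, max_add_min]
  -- both new imputations cost at least `maxWeight E w`, and together exactly twice that
  have h₁ := maxWeight_le_sum_add_sum hsup_nonneg hinf_nonneg' hcover_sup_inf
  have h₂ := maxWeight_le_sum_add_sum hinf_nonneg hsup_nonneg' hcover_inf_sup
  exact ⟨⟨hsup_nonneg, hinf_nonneg', hcover_sup_inf, by linarith⟩,
    ⟨hinf_nonneg, hsup_nonneg', hcover_inf_sup, by linarith⟩⟩

/-- The `V`-coordinates carry the reversed order, so that `⊔` and `⊓` are the lattice operations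
`(max, min)` and `(min, max)` of the core. -/
def coreSublattice (E : Finset (U × V)) (w : U × V → ℚ) : Sublattice ((U → ℚ) × (V → ℚᵒᵈ)) where
  carrier := {p | InCore E w p.1 (ofDual ∘ p.2)}
  supClosed' _ hp _ hq := (InCore.sup_inf hp hq).1
  infClosed' _ hp _ hq := (InCore.sup_inf hp hq).2

theorem image_fst_coreSublattice (i : U) :
    (fun p => p.1 i) '' (coreSublattice E w : Set ((U → ℚ) × (V → ℚᵒᵈ))) =
      {x | ∃ u v, InCore E w u v ∧ u i = x} := by
  ext x
  exact ⟨fun ⟨p, hp, hx⟩ => ⟨p.1, ofDual ∘ p.2, hp, hx⟩,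
    fun ⟨u, v, h, hx⟩ => ⟨(u, toDual ∘ v), h, hx⟩⟩

theorem image_snd_coreSublattice (j : V) :
    (fun p => p.2 j) '' (coreSublattice E w : Set ((U → ℚ) × (V → ℚᵒᵈ))) =
      ofDual ⁻¹' {x | ∃ u v, InCore E w u v ∧ v j = x} := by
  ext y
  exact ⟨fun ⟨p, hp, hy⟩ => ⟨p.1, ofDual ∘ p.2, hp, congrArg ofDual hy⟩,
    fun ⟨u, v, h, hy⟩ => ⟨(u, toDual ∘ v), h, congrArg toDual hy⟩⟩

end AssignmentGame

/-- The two extreme imputations `(u^h, v^l)` and `(u^l, v^h)`, built from the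
attained maximum/minimum profit of each vertex over the core, are themselves
core imputations. -/
theorem extreme_imputations_in_core {U V : Type*} [Fintype U] [Fintype V]
    [DecidableEq U] [DecidableEq V]
    (E : Finset (U × V)) (w : U × V → ℚ)
    (uh ul : U → ℚ) (vh vl : V → ℚ)
    (huh : ∀ i, IsGreatest {x : ℚ | ∃ u v, InCore E w u v ∧ u i = x} (uh i))
    (hul : ∀ i, IsLeast {x : ℚ | ∃ u v, InCore E w u v ∧ u i = x} (ul i))
    (hvh : ∀ j, IsGreatest {x : ℚ | ∃ u v, InCore E w u v ∧ v j = x} (vh j))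
    (hvl : ∀ j, IsLeast {x : ℚ | ∃ u v, InCore E w u v ∧ v j = x} (vl j)) :
    InCore E w uh vl ∧ InCore E w ul vh := by
  simp only [← image_fst_coreSublattice] at huh hul
  replace hvh j := image_snd_coreSublattice (E := E) (w := w) j ▸ (hvh j).dual
  replace hvl j := image_snd_coreSublattice (E := E) (w := w) j ▸ (hvl j).dual
  have hne : (coreSublattice E w : Set ((U → ℚ) × (V → ℚᵒᵈ))).Nonempty := by
    rcases isEmpty_or_nonempty (U ⊕ V) with h | ⟨i | j⟩
    · obtain ⟨_, _⟩ := isEmpty_sum.1 h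
      exact ⟨0, inCore_zero_of_isEmpty⟩
    · exact (huh i).nonempty.of_image
    · exact (hvl j).nonempty.of_image
  exact ⟨(coreSublattice E w).supClosed.mem_of_forall_isGreatest hne huh hvl,
    (coreSublattice E w).infClosed.mem_of_forall_isLeast hne hul hvh⟩
end

section
/- Consider the assignment game on the bipartite graph with U = {u1, u2}, V = {v1, v2} and edges (u1,v1) of weight 70, (u1,v2) of weight 110, (u2,v2) of weight 100, where (u1,v1) and (u2,v2) form the maximum weight matching. The leximin core imputation assigns (u1,u2,v1,v2) = (40, 30, 30, 70) and the leximax core imputation assigns (55, 45, 15, 55); in particular the two imputations differ. -/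
open scoped Classical

/-- Profits of the essential vertices, sorted in increasing order. -/
noncomputable def profitListInc {U V : Type*} [Fintype U] [Fintype V]
    [DecidableEq U] [DecidableEq V]
    (E : Finset (U × V)) (w : U × V → ℚ) (u : U → ℚ) (v : V → ℚ) : List ℚ :=
  ((Finset.univ.filter (fun q : U ⊕ V => EssentialVertex E w q)).val.map
    (Sum.elim u v)).sort (· ≤ ·)

/-- Profits of the essential vertices, sorted in decreasing order. -/
noncomputable def profitListDec {U V : Type*} [Fintype U] [Fintype V]
    [DecidableEq U] [DecidableEq V]
    (E : Finset (U × V)) (w : U × V → ℚ) (u : U → ℚ) (v : V → ℚ) : List ℚ :=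
  (profitListInc E w u v).reverse

/-- `(u, v)` is the leximin core imputation: its increasing sorted list of
profits of essential vertices is lexicographically largest over the core. -/
def IsLeximin {U V : Type*} [Fintype U] [Fintype V] [DecidableEq U] [DecidableEq V]
    (E : Finset (U × V)) (w : U × V → ℚ) (u : U → ℚ) (v : V → ℚ) : Prop :=
  InCore E w u v ∧ ∀ u' v', InCore E w u' v' →
    profitListInc E w u' v' = profitListInc E w u v ∨
      List.Lex (· < ·) (profitListInc E w u' v') (profitListInc E w u v)

/-- `(u, v)` is the leximax core imputation: its decreasing sorted list of
profits of essential vertices is lexicographically smallest over the core. -/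
def IsLeximax {U V : Type*} [Fintype U] [Fintype V] [DecidableEq U] [DecidableEq V]
    (E : Finset (U × V)) (w : U × V → ℚ) (u : U → ℚ) (v : V → ℚ) : Prop :=
  InCore E w u v ∧ ∀ u' v', InCore E w u' v' →
    profitListDec E w u v = profitListDec E w u' v' ∨
      List.Lex (· < ·) (profitListDec E w u v) (profitListDec E w u' v')

/-- The concrete example: edges `(u1,v1)` of weight 70, `(u1,v2)` of weight
110, `(u2,v2)` of weight 100. -/
def Ex : Finset (Fin 2 × Fin 2) := {((0 : Fin 2), (0 : Fin 2)), (0, 1), (1, 1)}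

def wEx : Fin 2 × Fin 2 → ℚ := fun e =>
  if e = ((0 : Fin 2), (0 : Fin 2)) then 70
  else if e = (0, 1) then 110
  else if e = (1, 1) then 100
  else 0

/-! The maximum matching is the diagonal, of weight 170, and it is the only one, so every vertex
is essential and the core is the segment `u₁ + v₁ = 70`, `u₂ + v₂ = 100`, `u₁ + v₂ ≥ 110` of
nonnegative points. If `u₂ ≥ 30` and `v₁ ≥ 30`, then `u₁ + v₂ ≤ 110`, so all constraints are tight
and the point is `(40, 30, 30, 70)`; every other core point has a profit below `30`, the smallest
profit of that point, so its increasing profit list is lexicographically smaller. Dually,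
`u₁ ≤ 55` and `v₂ ≤ 55` force `(55, 45, 15, 55)`, and every other core point has a profit above
`55`, the largest profit of that point. -/

namespace List

variable {α : Type*}

theorem exists_eq_cons_rel_of_pairwise {r : α → α → Prop} [Std.Refl r] {l : List α}
    (hl : l.Pairwise r) {x : α} (hx : x ∈ l) : ∃ a t, l = a :: t ∧ r a x := by
  obtain _ | ⟨a, t⟩ := l
  · simp at hx
  · refine ⟨a, t, rfl, ?_⟩
    rcases mem_cons.1 hx with rfl | hxt
    · exact refl x
    · exact rel_of_pairwise_cons hl hxt

end List

namespace Multiset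

variable {α : Type*} [LinearOrder α]

theorem sort_ne_nil {s : Multiset α} (hs : s ≠ 0) : s.sort (· ≤ ·) ≠ [] := fun h =>
  hs (by rw [← sort_eq s (· ≤ ·), h]; rfl)

theorem lex_sort_of_mem_of_forall_lt {s t : Multiset α} {x : α} (hx : x ∈ s) (ht : t ≠ 0)
    (hxt : ∀ y ∈ t, x < y) : List.Lex (· < ·) (s.sort (· ≤ ·)) (t.sort (· ≤ ·)) := by
  obtain ⟨a, l, hsa, hax⟩ := List.exists_eq_cons_rel_of_pairwise
    (pairwise_sort s (· ≤ ·)) ((mem_sort _).2 hx)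
  obtain ⟨b, m, htb⟩ := List.exists_cons_of_ne_nil (sort_ne_nil ht)
  have hb : b ∈ t := (mem_sort (· ≤ ·)).1 (htb ▸ List.mem_cons_self)
  rw [hsa, htb]
  exact .rel (hax.trans_lt (hxt b hb))

theorem lex_sort_reverse_of_mem_of_forall_lt {s t : Multiset α} {x : α} (hs : s ≠ 0)
    (hx : x ∈ t) (hxs : ∀ y ∈ s, y < x) :
    List.Lex (· < ·) (s.sort (· ≤ ·)).reverse (t.sort (· ≤ ·)).reverse := by
  obtain ⟨a, l, hta, hxa⟩ := List.exists_eq_cons_rel_of_pairwise (r := (· ≥ ·))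
    (List.pairwise_reverse.2 (pairwise_sort t (· ≤ ·)))
    (List.mem_reverse.2 ((mem_sort _).2 hx))
  obtain ⟨b, m, hsb⟩ := List.exists_cons_of_ne_nil (List.reverse_ne_nil_iff.2 (sort_ne_nil hs))
  have hb : b ∈ s := (mem_sort (· ≤ ·)).1 (List.mem_reverse.1 (hsb ▸ List.mem_cons_self))
  rw [hsb, hta]
  exact .rel ((hxs b hb).trans_le hxa)

end Multiset

section AssignmentGame

variable {U V : Type*}

theorem isMaxMatching_iff [DecidableEq U] [DecidableEq V] {E : Finset (U × V)}
    {w : U × V → ℚ} {M : Finset (U × V)} :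
    IsMaxMatching E w M ↔
      IsMatching E M ∧ ∀ M', IsMatching E M' → matchWeight w M' ≤ matchWeight w M := by
  have le_maxWeight {M'} (h : IsMatching E M') : matchWeight w M' ≤ maxWeight E w :=
    Finset.le_sup' _ (Finset.mem_filter.2 ⟨Finset.mem_powerset.2 h.1, h⟩)
  refine ⟨fun ⟨hM, hw⟩ => ⟨hM, fun M' hM' => hw ▸ le_maxWeight hM'⟩,
    fun ⟨hM, hle⟩ => ⟨hM, le_antisymm (le_maxWeight hM) ?_⟩⟩
  exact Finset.sup'_le _ _ fun M' hM' => hle M' (Finset.mem_filter.1 hM').2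

-- Declared only after `isMaxMatching_iff`: there `Finset.filter` must elaborate with the
-- classical instance built into `maxWeight`.
instance [DecidableEq U] [DecidableEq V] {E M : Finset (U × V)} : Decidable (IsMatching E M) :=
  inferInstanceAs (Decidable (_ ∧ _ ∧ _))

variable [Fintype U] [Fintype V]

def profitMultiset (u : U → ℚ) (v : V → ℚ) : Multiset ℚ :=
  (Finset.univ : Finset (U ⊕ V)).val.map (Sum.elim u v)

theorem mem_profitMultiset {u : U → ℚ} {v : V → ℚ} {y : ℚ} :
    y ∈ profitMultiset u v ↔ (∃ i, u i = y) ∨ ∃ j, v j = y := by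
  simp [profitMultiset]

theorem forall_mem_profitMultiset {u : U → ℚ} {v : V → ℚ} {p : ℚ → Prop} :
    (∀ y ∈ profitMultiset u v, p y) ↔ (∀ i, p (u i)) ∧ ∀ j, p (v j) := by
  simp [profitMultiset, or_imp, forall_and]

theorem profitMultiset_ne_zero_of_mem {u u' : U → ℚ} {v v' : V → ℚ} {x : ℚ}
    (hx : x ∈ profitMultiset u' v') : profitMultiset u v ≠ 0 := by
  obtain ⟨q, hq, -⟩ := Multiset.mem_map.1 hx
  exact fun h => Multiset.notMem_zero _ (Multiset.map_eq_zero.1 h ▸ hq)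

variable [DecidableEq U] [DecidableEq V] {E : Finset (U × V)} {w : U × V → ℚ}
  {u : U → ℚ} {v : V → ℚ}

theorem profitListInc_of_forall_essential (h : ∀ q, EssentialVertex E w q) :
    profitListInc E w u v = (profitMultiset u v).sort (· ≤ ·) := by
  unfold profitListInc
  rw [Finset.filter_true_of_mem fun q _ => h q]
  rfl

theorem isLeximin_of_forall_exists_lt (hess : ∀ q, EssentialVertex E w q)
    (hcore : InCore E w u v)
    (h : ∀ u' v', InCore E w u' v' →
      (u' = u ∧ v' = v) ∨ ∃ x ∈ profitMultiset u' v', ∀ y ∈ profitMultiset u v, x < y) :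
    IsLeximin E w u v := by
  refine ⟨hcore, fun u' v' h' => ?_⟩
  obtain ⟨rfl, rfl⟩ | ⟨x, hx, hlt⟩ := h u' v' h'
  · exact .inl rfl
  · simp only [profitListInc_of_forall_essential hess]
    exact .inr (Multiset.lex_sort_of_mem_of_forall_lt hx (profitMultiset_ne_zero_of_mem hx) hlt)

theorem isLeximax_of_forall_exists_gt (hess : ∀ q, EssentialVertex E w q)
    (hcore : InCore E w u v)
    (h : ∀ u' v', InCore E w u' v' →
      (u' = u ∧ v' = v) ∨ ∃ x ∈ profitMultiset u' v', ∀ y ∈ profitMultiset u v, y < x) :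
    IsLeximax E w u v := by
  refine ⟨hcore, fun u' v' h' => ?_⟩
  obtain ⟨rfl, rfl⟩ | ⟨x, hx, hlt⟩ := h u' v' h'
  · exact .inl rfl
  · simp only [profitListDec, profitListInc_of_forall_essential hess]
    exact .inr (Multiset.lex_sort_reverse_of_mem_of_forall_lt
      (profitMultiset_ne_zero_of_mem hx) hx hlt)

end AssignmentGame

theorem isMatching_ex_iff {M : Finset (Fin 2 × Fin 2)} :
    IsMatching Ex M ↔ M ∈ ({∅, {(0, 0)}, {(0, 1)}, {(1, 1)}, {(0, 0), (1, 1)}} :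
      Finset (Finset (Fin 2 × Fin 2))) := by
  revert M
  decide

theorem isMaxMatching_ex_diag : IsMaxMatching Ex wEx {((0 : Fin 2), (0 : Fin 2)), (1, 1)} := by
  refine isMaxMatching_iff.2 ⟨isMatching_ex_iff.2 (by simp), fun M hM => ?_⟩
  have hM := isMatching_ex_iff.1 hM
  fin_cases hM <;> norm_num [matchWeight, wEx, Prod.ext_iff]

theorem maxWeight_ex : maxWeight Ex wEx = 170 := by
  rw [← isMaxMatching_ex_diag.2]
  norm_num [matchWeight, wEx, Prod.ext_iff]

theorem isMaxMatching_ex_iff {M : Finset (Fin 2 × Fin 2)} :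
    IsMaxMatching Ex wEx M ↔ M = {((0 : Fin 2), (0 : Fin 2)), (1, 1)} := by
  refine ⟨fun ⟨hM, hw⟩ => ?_, fun h => h ▸ isMaxMatching_ex_diag⟩
  rw [maxWeight_ex] at hw
  have hM := isMatching_ex_iff.1 hM
  fin_cases hM <;> first | rfl | norm_num [matchWeight, wEx, Prod.ext_iff] at hw

theorem essentialVertex_ex (q : Fin 2 ⊕ Fin 2) : EssentialVertex Ex wEx q := by
  intro M hM
  rw [isMaxMatching_ex_iff.1 hM]
  rcases q with i | j
  · exact ⟨i, by fin_cases i <;> simp⟩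
  · exact ⟨j, by fin_cases j <;> simp⟩

theorem inCore_ex_iff {u v : Fin 2 → ℚ} :
    InCore Ex wEx u v ↔ (0 ≤ u 0 ∧ 0 ≤ u 1 ∧ 0 ≤ v 0 ∧ 0 ≤ v 1) ∧
      u 0 + v 0 = 70 ∧ u 1 + v 1 = 100 ∧ 110 ≤ u 0 + v 1 := by
  have hedges : (∀ e ∈ Ex, wEx e ≤ u e.1 + v e.2) ↔
      70 ≤ u 0 + v 0 ∧ 110 ≤ u 0 + v 1 ∧ 100 ≤ u 1 + v 1 := by
    simp [Ex, wEx]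
  rw [InCore, hedges, maxWeight_ex, Fin.forall_fin_two, Fin.forall_fin_two, Fin.sum_univ_two,
    Fin.sum_univ_two]
  constructor
  · rintro ⟨⟨hu0, hu1⟩, ⟨hv0, hv1⟩, ⟨h00, h01, h11⟩, hsum⟩
    exact ⟨⟨hu0, hu1, hv0, hv1⟩, by linarith, by linarith, h01⟩
  · rintro ⟨⟨hu0, hu1, hv0, hv1⟩, h00, h11, h01⟩
    exact ⟨⟨hu0, hu1⟩, ⟨hv0, hv1⟩, ⟨h00.ge, h01, h11.ge⟩, by linarith⟩

theorem isLeximin_ex : IsLeximin Ex wEx ![40, 30] ![30, 70] := by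
  refine isLeximin_of_forall_exists_lt essentialVertex_ex (inCore_ex_iff.2 (by norm_num))
    fun u v h => ?_
  obtain ⟨-, h00, h11, h01⟩ := inCore_ex_iff.1 h
  rcases lt_or_ge (u 1) 30 with hlow | hu1
  · refine .inr ⟨u 1, mem_profitMultiset.2 (.inl ⟨1, rfl⟩), ?_⟩
    norm_num [forall_mem_profitMultiset, Fin.forall_fin_two]
    and_intros <;> linarith
  rcases lt_or_ge (v 0) 30 with hlow | hv0
  · refine .inr ⟨v 0, mem_profitMultiset.2 (.inr ⟨0, rfl⟩), ?_⟩
    norm_num [forall_mem_profitMultiset, Fin.forall_fin_two]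
    and_intros <;> linarith
  refine .inl ⟨?_, ?_⟩ <;> ext i <;> fin_cases i <;> simp <;> linarith

theorem isLeximax_ex : IsLeximax Ex wEx ![55, 45] ![15, 55] := by
  refine isLeximax_of_forall_exists_gt essentialVertex_ex (inCore_ex_iff.2 (by norm_num))
    fun u v h => ?_
  obtain ⟨-, h00, h11, h01⟩ := inCore_ex_iff.1 h
  rcases lt_or_ge 55 (u 0) with hhigh | hu0
  · refine .inr ⟨u 0, mem_profitMultiset.2 (.inl ⟨0, rfl⟩), ?_⟩
    norm_num [forall_mem_profitMultiset, Fin.forall_fin_two]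
    and_intros <;> linarith
  rcases lt_or_ge 55 (v 1) with hhigh | hv1
  · refine .inr ⟨v 1, mem_profitMultiset.2 (.inr ⟨1, rfl⟩), ?_⟩
    norm_num [forall_mem_profitMultiset, Fin.forall_fin_two]
    and_intros <;> linarith
  refine .inl ⟨?_, ?_⟩ <;> ext i <;> fin_cases i <;> simp <;> linarith

/-- In the example, `{(u1,v1), (u2,v2)}` is the maximum weight matching, the
leximin core imputation is `(40, 30, 30, 70)`, the leximax core imputation is
`(55, 45, 15, 55)`, and the two differ. -/
theorem leximin_ne_leximax_example :
    IsMaxMatching Ex wEx {((0 : Fin 2), (0 : Fin 2)), (1, 1)} ∧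
      IsLeximin Ex wEx ![40, 30] ![30, 70] ∧
      IsLeximax Ex wEx ![55, 45] ![15, 55] ∧
      ((![40, 30] : Fin 2 → ℚ) ≠ ![55, 45] ∨
        (![30, 70] : Fin 2 → ℚ) ≠ ![15, 55]) :=
  ⟨isMaxMatching_ex_diag, isLeximin_ex, isLeximax_ex, .inl fun h => by simpa using congrFun h 0⟩
end
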